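/- arXiv:2602.07370 — 8 statements merged into one kernel-verified Lean document; each statement's English description precedes it below -/
import Mathlib

section
/- Let S be a finite sample of labeled examples in {0,1}^d × {0,1} that is consistent with some F-decision list c* (i.e., c*(x) = σ for every (x,σ) ∈ S). Let f_1, …, f_j be distinct features in F, none equal to the constant-true function T, and define S_1 = S, F_1 = F ∪ {T}, and inductively S_{i+1} = {(x,σ) ∈ S_i : f_i(x) = 0} and F_{i+1} = F_i \ {f_i}. Then for every i with 1 ≤ i ≤ j+1 there exists a decision list all of whose features lie in F_i that is consistent with S_i. -/
/-- A feature over `{0,1}^d` is a Boolean function on `Fin d → Bool`. -/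
abbrev Feature (d : ℕ) := (Fin d → Bool) → Bool

/-- A decision list: a finite sequence of rules `(g, b)` together with a final default bit
(corresponding to the terminal rule `(T, b_{m+1})` for the constant-true function `T`). -/
abbrev DecList (d : ℕ) := List (Feature d × Bool) × Bool

/-- Evaluate a list of rules with a default bit: output `b` for the first rule `(g,b)` with
`g x = true`, and the default bit if no rule fires. -/
def evalRules {d : ℕ} : List (Feature d × Bool) → Bool → (Fin d → Bool) → Bool
  | [], bdef, _ => bdef
  | (g, b) :: rest, bdef, x => if g x = true then b else evalRules rest bdef x

/-- Evaluate a decision list on an input. -/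
def evalDL {d : ℕ} (L : DecList d) (x : Fin d → Bool) : Bool :=
  evalRules L.1 L.2 x

/-- A decision list is consistent with a labeled sample `S` if it outputs `σ` on `x`
for every `(x, σ) ∈ S`. -/
def Consistent {d : ℕ} (L : DecList d) (S : Finset ((Fin d → Bool) × Bool)) : Prop :=
  ∀ p ∈ S, evalDL L p.1 = p.2


open Classical in
noncomputable def removeFeat {d : ℕ} (g : Feature d) :
    List (Feature d × Bool) → List (Feature d × Bool)
  | [] => []
  | (h, b) :: t => if h = g then removeFeat g t else (h, b) :: removeFeat g t

lemma removeFeat_mem {d : ℕ} (g : Feature d) (l : List (Feature d × Bool))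
    (p : Feature d × Bool) (hp : p ∈ removeFeat g l) : p ∈ l ∧ p.1 ≠ g := by
  induction l with
  | nil => simp [removeFeat] at hp
  | cons a t ih =>
    obtain ⟨h, b⟩ := a
    simp only [removeFeat] at hp
    by_cases hg : h = g
    · simp [hg] at hp
      rcases ih hp with ⟨h1, h2⟩
      exact ⟨List.mem_cons_of_mem _ h1, h2⟩
    · simp [hg] at hp
      rcases hp with rfl | hp
      · exact ⟨List.mem_cons_self, hg⟩
      · rcases ih hp with ⟨h1, h2⟩
        exact ⟨List.mem_cons_of_mem _ h1, h2⟩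

lemma evalRules_removeFeat {d : ℕ} (g : Feature d) (l : List (Feature d × Bool))
    (bdef : Bool) (x : Fin d → Bool) (hx : g x = false) :
    evalRules (removeFeat g l) bdef x = evalRules l bdef x := by
  induction l with
  | nil => rfl
  | cons a t ih =>
    obtain ⟨h, b⟩ := a
    simp only [removeFeat]
    by_cases hg : h = g
    · subst hg
      simp [evalRules, hx, ih]
    · simp [hg, evalRules, ih]


/-- If a sample `S` is consistent with an `F`-decision list, and `S_i`, `F_i` are produced
by repeatedly selecting distinct features `f₁, …, f_j ∈ F` (none the constant-true
function), keeping only the examples the selected feature does not fire on and removing the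
selected feature, then for every `1 ≤ i ≤ j+1` some decision list whose features all lie in
`F_i` is consistent with `S_i`. -/

theorem stmt_0 (d j : ℕ) (F : Set (Feature d))
    (S : Finset ((Fin d → Bool) × Bool))
    (cstar : DecList d)
    (hc_feat : ∀ p ∈ cstar.1, p.1 ∈ F)
    (hc_cons : Consistent cstar S)
    (f : Fin j → Feature d) (hinj : Function.Injective f)
    (hfF : ∀ i, f i ∈ F) (hfT : ∀ i, f i ≠ fun _ => true)
    (Ssub : ℕ → Finset ((Fin d → Bool) × Bool))
    (Fsub : ℕ → Set (Feature d))
    (hS1 : Ssub 1 = S) (hF1 : Fsub 1 = F ∪ {fun _ => true})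
    (hSstep : ∀ i : Fin j,
      Ssub (i.1 + 2) = (Ssub (i.1 + 1)).filter (fun p => f i p.1 = false))
    (hFstep : ∀ i : Fin j, Fsub (i.1 + 2) = Fsub (i.1 + 1) \ {f i}) :
    ∀ i : ℕ, 1 ≤ i → i ≤ j + 1 →
      ∃ L : DecList d, (∀ p ∈ L.1, p.1 ∈ Fsub i) ∧ Consistent L (Ssub i) := by
  intro i h1 h2
  induction i with
  | zero => omega
  | succ n ih =>
    match n, ih with
    | 0, _ =>
      refine ⟨cstar, ?_, ?_⟩
      · intro p hp; rw [hF1]; exact Or.inl (hc_feat p hp)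
      · rwa [hS1]
    | m + 1, ih =>
      have hm : m < j := by omega
      obtain ⟨L, hLfeat, hLcons⟩ := ih (by omega) (by omega)
      set k : Fin j := ⟨m, hm⟩
      refine ⟨(removeFeat (f k) L.1, L.2), ?_, ?_⟩
      · intro p hp
        obtain ⟨hmem, hne⟩ := removeFeat_mem _ _ _ hp
        rw [hFstep k]
        exact ⟨hLfeat p hmem, hne⟩
      · intro p hp
        rw [hSstep k, Finset.mem_filter] at hp
        obtain ⟨hp1, hp2⟩ := hp
        have := hLcons p hp1
        rw [← this]
        exact evalRules_removeFeat _ _ _ _ hp2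
end

section
/- Let H be a finite nonempty set, let Z be a set, and let q : Z^n × H → ℝ be a score function of sensitivity 1, meaning |q(S,h) − q(S',h)| ≤ 1 for every h ∈ H and every pair of datasets S, S' ∈ Z^n differing in a single entry. For ε > 0, let M_E(S, q, ε) denote the distribution on H assigning to each h the probability exp(ε q(S,h)/2) / Σ_{h' ∈ H} exp(ε q(S,h')/2). Then for every pair of datasets S, S' ∈ Z^n differing in a single entry and every h ∈ H, Pr[M_E(S,q,ε) = h] ≤ e^ε · Pr[M_E(S',q,ε) = h]. -/
open Real Finset

theorem exp_le_exp_mul_exp_of_abs_sub_le {x y c : ℝ} (h : |x - y| ≤ c) :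
    exp x ≤ exp c * exp y := by
  rw [← exp_add, exp_le_exp]
  linarith [(abs_le.mp h).2]

-- One factor `e^c` comes from the numerator, the other from the normalizing sum.
theorem exp_div_sum_exp_le_exp_two_mul {ι : Type*} [Fintype ι] {f g : ι → ℝ} {c : ℝ}
    (hfg : ∀ i, |f i - g i| ≤ c) (a : ι) :
    exp (f a) / ∑ i, exp (f i) ≤ exp (2 * c) * (exp (g a) / ∑ i, exp (g i)) := by
  have hpos : ∀ u : ι → ℝ, 0 < ∑ i, exp (u i) := fun u =>
    sum_pos (fun i _ => exp_pos (u i)) ⟨a, mem_univ a⟩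
  have hnum : exp (f a) ≤ exp c * exp (g a) := exp_le_exp_mul_exp_of_abs_sub_le (hfg a)
  have hden : ∑ i, exp (g i) ≤ exp c * ∑ i, exp (f i) := by
    rw [mul_sum]
    exact sum_le_sum fun i _ =>
      exp_le_exp_mul_exp_of_abs_sub_le (by rw [abs_sub_comm]; exact hfg i)
  calc exp (f a) / ∑ i, exp (f i)
      ≤ exp c * exp (g a) / ((∑ i, exp (g i)) / exp c) :=
        div_le_div₀ (by positivity) hnum (div_pos (hpos g) (exp_pos c))
          ((div_le_iff₀' (exp_pos c)).mpr hden)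
    _ = exp (2 * c) * (exp (g a) / ∑ i, exp (g i)) := by
        rw [two_mul, exp_add]
        field_simp

theorem stmt_1_general {Z H : Type*} [Fintype H] (n : ℕ)
    (q : (Fin n → Z) → H → ℝ) (ε : ℝ) (hε : 0 < ε)
    (hsens : ∀ (h : H) (S S' : Fin n → Z),
      (∃ i : Fin n, ∀ k : Fin n, k ≠ i → S k = S' k) → |q S h - q S' h| ≤ 1)
    (S S' : Fin n → Z) (hneighbor : ∃ i : Fin n, ∀ k : Fin n, k ≠ i → S k = S' k)
    (h : H) :
    Real.exp (ε * q S h / 2) / (∑ h' : H, Real.exp (ε * q S h' / 2))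
      ≤ Real.exp ε *
        (Real.exp (ε * q S' h / 2) / (∑ h' : H, Real.exp (ε * q S' h' / 2))) := by
  have hscore : ∀ h' : H, |ε * q S h' / 2 - ε * q S' h' / 2| ≤ ε / 2 := fun h' => by
    rw [← sub_div, ← mul_sub, abs_div, abs_mul, abs_of_pos hε, abs_two]
    gcongr
    exact mul_le_of_le_one_right hε.le (hsens h' S S' hneighbor)
  simpa only [mul_div_cancel₀ ε two_ne_zero] using exp_div_sum_exp_le_exp_two_mul hscore h

/-- Privacy of the Exponential Mechanism: for a sensitivity-1 score function
`q : Zⁿ × H → ℝ`, neighboring datasets `S, S'` (differing in a single entry), and any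
candidate `h`, the probability that the mechanism (which outputs each `h` with probability
proportional to `exp(ε q(S,h)/2)`) outputs `h` on `S` is at most `e^ε` times the probability
that it outputs `h` on `S'`. -/
theorem stmt_1 {Z H : Type*} [Fintype H] [Nonempty H] (n : ℕ)
    (q : (Fin n → Z) → H → ℝ) (ε : ℝ) (hε : 0 < ε)
    (hsens : ∀ (h : H) (S S' : Fin n → Z),
      (∃ i : Fin n, ∀ k : Fin n, k ≠ i → S k = S' k) → |q S h - q S' h| ≤ 1)
    (S S' : Fin n → Z) (hneighbor : ∃ i : Fin n, ∀ k : Fin n, k ≠ i → S k = S' k)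
    (h : H) :
    Real.exp (ε * q S h / 2) / (∑ h' : H, Real.exp (ε * q S h' / 2))
      ≤ Real.exp ε *
        (Real.exp (ε * q S' h / 2) / (∑ h' : H, Real.exp (ε * q S' h' / 2))) :=
  stmt_1_general n q ε hε hsens S S' hneighbor h
end

section
/- Let H be a finite nonempty set, S ∈ Z^n a dataset, q : Z^n × H → ℝ a score function, and ε > 0. Let M_E(S,q,ε) be the distribution on H assigning each h probability proportional to exp(ε q(S,h)/2). Then for every τ > 0, with probability at least 1 − e^{−τ} over h drawn from M_E(S,q,ε), it holds that q(S,h) ≥ max_{f ∈ H} q(S,f) − (2/ε)(log|H| + τ). -/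
open scoped Classical in
/-- Utility of the Exponential Mechanism: with probability at least `1 - e^{-τ}` over `h`
drawn with probability proportional to `exp(ε q(S,h)/2)`, the score `q(S,h)` is within
`(2/ε)(log |H| + τ)` of the maximum score. -/
theorem stmt_2 {Z H : Type*} [Fintype H] [Nonempty H] (n : ℕ)
    (q : (Fin n → Z) → H → ℝ) (ε τ : ℝ) (hε : 0 < ε) (hτ : 0 < τ)
    (S : Fin n → Z) :
    1 - Real.exp (-τ) ≤
      (∑ h ∈ Finset.univ.filter (fun h : H =>
          (Finset.univ.sup' Finset.univ_nonempty (q S))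
            - (2 / ε) * (Real.log (Fintype.card H) + τ) ≤ q S h),
        Real.exp (ε * q S h / 2)) /
      (∑ h : H, Real.exp (ε * q S h / 2)) := by
  set M := Finset.univ.sup' Finset.univ_nonempty (q S) with hM
  set t := (2 / ε) * (Real.log (Fintype.card H) + τ) with ht
  set P : H → Prop := fun h => M - t ≤ q S h with hP
  set D := ∑ h : H, Real.exp (ε * q S h / 2) with hD
  have hDpos : 0 < D :=
    Finset.sum_pos (fun h _ => Real.exp_pos _) Finset.univ_nonempty
  rw [le_div_iff₀ hDpos]
  have hsplit :
      (∑ h ∈ Finset.univ.filter P, Real.exp (ε * q S h / 2))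
        + (∑ h ∈ Finset.univ.filter (fun h => ¬ P h), Real.exp (ε * q S h / 2)) = D := by
    rw [hD]; exact Finset.sum_filter_add_sum_filter_not _ _ _
  -- exp(ε M / 2) ≤ D
  obtain ⟨h₀, -, hh₀⟩ := Finset.exists_mem_eq_sup' (Finset.univ_nonempty (α := H)) (q S)
  have hMD : Real.exp (ε * M / 2) ≤ D := by
    rw [hD, hM, hh₀]
    exact Finset.single_le_sum (f := fun h => Real.exp (ε * q S h / 2))
      (fun h _ => (Real.exp_pos _).le) (Finset.mem_univ h₀)
  have hcard : (0 : ℝ) < (Fintype.card H : ℝ) := by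
    exact_mod_cast Fintype.card_pos
  -- bound on bad sum
  have hbad : (∑ h ∈ Finset.univ.filter (fun h => ¬ P h), Real.exp (ε * q S h / 2))
      ≤ Real.exp (-τ) * D := by
    have hle : ∀ h ∈ Finset.univ.filter (fun h => ¬ P h),
        Real.exp (ε * q S h / 2) ≤ Real.exp (ε * (M - t) / 2) := by
      intro h hh
      have := (Finset.mem_filter.mp hh).2
      have hq : q S h ≤ M - t := le_of_not_ge this
      exact Real.exp_le_exp.mpr (by nlinarith)
    calc (∑ h ∈ Finset.univ.filter (fun h => ¬ P h), Real.exp (ε * q S h / 2))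
        ≤ ∑ _h ∈ Finset.univ.filter (fun h => ¬ P h), Real.exp (ε * (M - t) / 2) :=
          Finset.sum_le_sum hle
      _ = (Finset.univ.filter (fun h => ¬ P h)).card * Real.exp (ε * (M - t) / 2) := by
          rw [Finset.sum_const, nsmul_eq_mul]
      _ ≤ (Fintype.card H : ℝ) * Real.exp (ε * (M - t) / 2) := by
          apply mul_le_mul_of_nonneg_right _ (Real.exp_pos _).le
          exact_mod_cast Finset.card_filter_le _ _
      _ = Real.exp (-τ) * Real.exp (ε * M / 2) := by
          have hεt : ε * t / 2 = Real.log (Fintype.card H) + τ := by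
            rw [ht]; field_simp
          rw [show ε * (M - t) / 2 = ε * M / 2 - ε * t / 2 by ring, hεt,
            Real.exp_sub, Real.exp_add, Real.exp_log hcard, Real.exp_neg]
          have := Real.exp_pos τ
          field_simp
      _ ≤ Real.exp (-τ) * D := by gcongr
  nlinarith [Real.exp_pos (-τ)]
end

section
/- Consider a T-round random process on a probability space with filtration (F_i)_{i=0}^T in which, for each i, p_i is an F_{i−1}-measurable random variable with values in [0,1] and X_i is an F_i-measurable {0,1}-valued random variable with E[X_i | F_{i−1}] = p_i. Let N_i = ∏_{j=1}^{i}(1 − X_j) be the indicator that no heads are realized within the first i steps, and let Y = Σ_{i=1}^{T} p_i N_i. Then for every y > 0, Pr[Y > y] ≤ exp(−y). -/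
/-! With `N k = survival X k = ∏_{j ≤ k} (1 - X j)` and `S k = compensator p X k =
∑_{i ≤ k} p i * N i` (the compensator of the first-heads indicator `1 - N k`), the process
`N k * exp (S k)` is a nonnegative supermartingale started at `1`: from round `k` to `k + 1` it is
multiplied by `exp (p (k + 1)) * (1 - X (k + 1))`, whose conditional mean `exp p * (1 - p)` is at
most `exp p * exp (-p) = 1`. Stop it at the first time `τ` at which `S` exceeds `y`. Since `S` no
longer grows once a head has appeared, `N τ = 1` there, so on `{y < S T}` the stopped value is
`exp (S τ) ≥ exp y`; optional stopping and Markov's inequality finish. Beyond the horizon `T` the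
process is continued with `p = X = 0`. -/

open MeasureTheory Finset Real

lemma MeasureTheory.Supermartingale.integral_stoppedValue_le {Ω : Type*} {m : MeasurableSpace Ω}
    {μ : Measure Ω} [IsFiniteMeasure μ] {F : Filtration ℕ m} {f : ℕ → Ω → ℝ}
    (hf : Supermartingale f F μ) {τ : Ω → ℕ∞} (hτ : IsStoppingTime F τ) {n : ℕ}
    (hbdd : ∀ ω, τ ω ≤ n) : ∫ ω, stoppedValue f τ ω ∂μ ≤ ∫ ω, f 0 ω ∂μ := by
  have := hf.neg.expected_stoppedValue_mono (isStoppingTime_const F 0) hτ (fun _ ↦ bot_le) hbdd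
  simpa [stoppedValue, integral_neg] using this

namespace AdaptiveCoins

variable {Ω : Type*} {m : MeasurableSpace Ω} {p X : ℕ → Ω → ℝ} {k n : ℕ} {ω : Ω} {y : ℝ}

def survival (X : ℕ → Ω → ℝ) (k : ℕ) (ω : Ω) : ℝ :=
  ∏ j ∈ Icc 1 k, (1 - X j ω)

def compensator (p X : ℕ → Ω → ℝ) (k : ℕ) (ω : Ω) : ℝ :=
  ∑ i ∈ Icc 1 k, p i ω * survival X i ω

noncomputable def expProcess (p X : ℕ → Ω → ℝ) (k : ℕ) (ω : Ω) : ℝ :=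
  survival X k ω * exp (compensator p X k ω)

@[simp] lemma survival_zero : survival X 0 ω = 1 := by simp [survival]

lemma survival_succ : survival X (k + 1) ω = survival X k ω * (1 - X (k + 1) ω) :=
  prod_Icc_succ_top (Nat.le_add_left 1 k) _

@[simp] lemma compensator_zero : compensator p X 0 ω = 0 := by simp [compensator]

lemma compensator_succ :
    compensator p X (k + 1) ω = compensator p X k ω + p (k + 1) ω * survival X (k + 1) ω :=
  sum_Icc_succ_top (Nat.le_add_left 1 k) _

@[simp] lemma expProcess_zero : expProcess p X 0 ω = 1 := by simp [expProcess]

lemma survival_eq_zero_or_one (hX : ∀ i ω, X (i + 1) ω = 0 ∨ X (i + 1) ω = 1) (k : ℕ)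
    (ω : Ω) : survival X k ω = 0 ∨ survival X k ω = 1 := by
  induction k with
  | zero => simp
  | succ k ih =>
    rcases hX k ω with h | h <;> rcases ih with ih | ih <;> simp [survival_succ, h, ih]

lemma compensator_le (hX : ∀ i ω, X (i + 1) ω = 0 ∨ X (i + 1) ω = 1)
    (hp : ∀ i ω, p (i + 1) ω ≤ 1) (k : ℕ) (ω : Ω) : compensator p X k ω ≤ k := by
  induction k with
  | zero => simp
  | succ k ih =>
    rw [compensator_succ, Nat.cast_succ]
    rcases survival_eq_zero_or_one hX (k + 1) ω with h | h <;> simp only [h] <;> linarith [hp k ω]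

lemma expProcess_succ (hX : ∀ i ω, X (i + 1) ω = 0 ∨ X (i + 1) ω = 1) (k : ℕ) (ω : Ω) :
    expProcess p X (k + 1) ω = expProcess p X k ω * exp (p (k + 1) ω) * (1 - X (k + 1) ω) := by
  simp only [expProcess, compensator_succ, survival_succ]
  rcases hX k ω with h | h <;> rcases survival_eq_zero_or_one hX k ω with hN | hN <;>
    simp [h, hN, exp_add]

lemma exp_le_expProcess_hittingBtwn (hX : ∀ i ω, X (i + 1) ω = 0 ∨ X (i + 1) ω = 1)
    (hω : y < compensator p X n ω) :
    exp y ≤ expProcess p X (hittingBtwn (compensator p X) (Set.Ioi y) 0 n ω) ω := by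
  set t := hittingBtwn (compensator p X) (Set.Ioi y) 0 n ω
  have hyt : y < compensator p X t ω := hittingBtwn_mem_set ⟨n, ⟨Nat.zero_le n, le_rfl⟩, hω⟩
  have hN : survival X t ω = 1 := by
    refine (survival_eq_zero_or_one hX t ω).resolve_left fun hN ↦ ?_
    obtain ⟨k, hk⟩ : ∃ k, t = k + 1 :=
      Nat.exists_eq_succ_of_ne_zero fun h0 ↦ by simp [h0] at hN
    rw [hk, compensator_succ, ← hk, hN, mul_zero, add_zero] at hyt
    exact notMem_of_lt_hittingBtwn (hk ▸ k.lt_succ_self : k < t) (Nat.zero_le k) hyt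
  simpa [expProcess, hN] using hyt.le

structure IsAdaptiveCoinProcess (μ : Measure Ω) (F : Filtration ℕ m) (p X : ℕ → Ω → ℝ) :
    Prop where
  measurable_bias : ∀ i, Measurable[F i] (p (i + 1))
  bias_le_one : ∀ i ω, p (i + 1) ω ≤ 1
  measurable_coin : ∀ i, Measurable[F (i + 1)] (X (i + 1))
  coin_eq_zero_or_one : ∀ i ω, X (i + 1) ω = 0 ∨ X (i + 1) ω = 1
  condExp_coin : ∀ i, μ[X (i + 1) | F i] =ᵐ[μ] p (i + 1)

namespace IsAdaptiveCoinProcess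

variable {μ : Measure Ω} {F : Filtration ℕ m}

lemma adapted_survival (h : IsAdaptiveCoinProcess μ F p X) : Adapted F (survival X) := by
  intro k
  show Measurable[F k] fun ω ↦ survival X k ω
  induction k with
  | zero => simp only [survival_zero]; exact measurable_const
  | succ k ih =>
    simp_rw [survival_succ]
    exact (ih.mono (F.mono k.le_succ) le_rfl).mul (measurable_const.sub (h.measurable_coin k))

lemma adapted_compensator (h : IsAdaptiveCoinProcess μ F p X) : Adapted F (compensator p X) := by
  intro k
  show Measurable[F k] fun ω ↦ compensator p X k ω
  induction k with
  | zero => simp only [compensator_zero]; exact measurable_const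
  | succ k ih =>
    simp_rw [compensator_succ]
    exact (ih.mono (F.mono k.le_succ) le_rfl).add
      (((h.measurable_bias k).mono (F.mono k.le_succ) le_rfl).mul (h.adapted_survival (k + 1)))

lemma adapted_expProcess (h : IsAdaptiveCoinProcess μ F p X) : Adapted F (expProcess p X) :=
  fun k ↦ (h.adapted_survival k).mul (h.adapted_compensator k).exp

lemma expProcess_nonneg (h : IsAdaptiveCoinProcess μ F p X) (k : ℕ) (ω : Ω) :
    0 ≤ expProcess p X k ω := by
  rcases survival_eq_zero_or_one h.coin_eq_zero_or_one k ω with hN | hN <;>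
    simp [expProcess, hN, exp_nonneg]

lemma expProcess_le (h : IsAdaptiveCoinProcess μ F p X) (k : ℕ) (ω : Ω) :
    expProcess p X k ω ≤ exp k := by
  rcases survival_eq_zero_or_one h.coin_eq_zero_or_one k ω with hN | hN
  · simp [expProcess, hN, exp_nonneg]
  · simpa [expProcess, hN] using compensator_le h.coin_eq_zero_or_one h.bias_le_one k ω

lemma integrable_expProcess [IsFiniteMeasure μ] (h : IsAdaptiveCoinProcess μ F p X) (k : ℕ) :
    Integrable (expProcess p X k) μ :=
  .of_bound ((h.adapted_expProcess k).mono (F.le k) le_rfl).aestronglyMeasurable (exp k)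
    (ae_of_all _ fun ω ↦ by
      rw [Real.norm_of_nonneg (h.expProcess_nonneg k ω)]; exact h.expProcess_le k ω)

lemma integrable_coin [IsFiniteMeasure μ] (h : IsAdaptiveCoinProcess μ F p X) (k : ℕ) :
    Integrable (X (k + 1)) μ :=
  .of_bound ((h.measurable_coin k).mono (F.le _) le_rfl).aestronglyMeasurable 1
    (ae_of_all _ fun ω ↦ by rcases h.coin_eq_zero_or_one k ω with hX | hX <;> simp [hX])

lemma condExp_expProcess_succ_le [IsFiniteMeasure μ] (h : IsAdaptiveCoinProcess μ F p X)
    (k : ℕ) : μ[expProcess p X (k + 1) | F k] ≤ᵐ[μ] expProcess p X k := by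
  set g : Ω → ℝ := fun ω ↦ expProcess p X k ω * exp (p (k + 1) ω)
  have hg : StronglyMeasurable[F k] g :=
    ((h.adapted_expProcess k).mul (h.measurable_bias k).exp).stronglyMeasurable
  have hsucc : expProcess p X (k + 1) = g * (1 - X (k + 1)) :=
    funext (expProcess_succ h.coin_eq_zero_or_one k)
  have hint : Integrable (1 - X (k + 1)) μ := (integrable_const 1).sub (h.integrable_coin k)
  have hcond : μ[1 - X (k + 1) | F k] =ᵐ[μ] 1 - p (k + 1) := by
    filter_upwards [condExp_sub (integrable_const 1) (h.integrable_coin k) (F k),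
      h.condExp_coin k] with ω h1 h2
    rw [condExp_const (F.le k), Pi.sub_apply, h2] at h1
    exact h1
  rw [hsucc]
  filter_upwards [condExp_mul_of_stronglyMeasurable_left hg (hsucc ▸ h.integrable_expProcess _)
    hint, hcond] with ω h1 h2
  rw [h1, Pi.mul_apply, h2]
  calc g ω * (1 - p (k + 1)) ω
        = expProcess p X k ω * (exp (p (k + 1) ω) * (1 - p (k + 1) ω)) := by
          simp [g, mul_assoc]
    _ ≤ expProcess p X k ω * 1 := by
        gcongr
        · exact h.expProcess_nonneg k ω
        · calc exp (p (k + 1) ω) * (1 - p (k + 1) ω)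
              ≤ exp (p (k + 1) ω) * exp (-p (k + 1) ω) := by
                gcongr; exact one_sub_le_exp_neg _
            _ = 1 := by rw [← exp_add, add_neg_cancel, exp_zero]
    _ = expProcess p X k ω := mul_one _

lemma supermartingale_expProcess [IsFiniteMeasure μ] (h : IsAdaptiveCoinProcess μ F p X) :
    Supermartingale (expProcess p X) F μ :=
  supermartingale_nat (fun k ↦ (h.adapted_expProcess k).stronglyMeasurable)
    h.integrable_expProcess h.condExp_expProcess_succ_le

lemma measure_lt_compensator_le [IsProbabilityMeasure μ] (h : IsAdaptiveCoinProcess μ F p X)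
    (n : ℕ) (y : ℝ) : μ {ω | y < compensator p X n ω} ≤ ENNReal.ofReal (exp (-y)) := by
  set τ : Ω → ℕ∞ := fun ω ↦ (hittingBtwn (compensator p X) (Set.Ioi y) 0 n ω : ℕ)
  have hτ : IsStoppingTime F τ :=
    h.adapted_compensator.isStoppingTime_hittingBtwn measurableSet_Ioi
  have hτ_le (ω : Ω) : τ ω ≤ n := by simp only [τ, Nat.cast_le]; exact hittingBtwn_le ω
  set V := stoppedValue (expProcess p X) τ
  have hV_int : ∫ ω, V ω ∂μ ≤ 1 := by
    simpa using h.supermartingale_expProcess.integral_stoppedValue_le hτ hτ_le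
  have hmarkov := mul_meas_ge_le_integral_of_nonneg
    (ae_of_all _ fun ω ↦ h.expProcess_nonneg _ ω)
    (integrable_stoppedValue ℕ hτ h.integrable_expProcess hτ_le) (exp y)
  have hsub : {ω | y < compensator p X n ω} ⊆ {ω | exp y ≤ V ω} := fun ω hω ↦ by
    simpa [V, stoppedValue, τ] using exp_le_expProcess_hittingBtwn h.coin_eq_zero_or_one hω
  calc μ {ω | y < compensator p X n ω} ≤ μ {ω | exp y ≤ V ω} := measure_mono hsub
    _ = ENNReal.ofReal (μ.real {ω | exp y ≤ V ω}) := (ofReal_measureReal).symm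
    _ ≤ ENNReal.ofReal (exp (-y)) := by
        gcongr
        rw [exp_neg, ← one_div, le_div_iff₀' (exp_pos y)]
        exact hmarkov.trans hV_int

end IsAdaptiveCoinProcess

lemma compensator_indicator_Iic (T : ℕ) :
    compensator ((Set.Iic T).indicator p) ((Set.Iic T).indicator X) T = compensator p X T := by
  funext ω
  refine sum_congr rfl fun i hi ↦ ?_
  have hiT : i ≤ T := (mem_Icc.1 hi).2
  rw [Set.indicator_of_mem (Set.mem_Iic.2 hiT)]
  congr 1
  refine prod_congr rfl fun j hj ↦ ?_
  rw [Set.indicator_of_mem (Set.mem_Iic.2 ((mem_Icc.1 hj).2.trans hiT))]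

lemma isAdaptiveCoinProcess_indicator_Iic {μ : Measure Ω} {F : Filtration ℕ m} {T : ℕ}
    (hp_meas : ∀ i ∈ Icc 1 T, Measurable[F (i - 1)] (p i))
    (hp_le : ∀ i ∈ Icc 1 T, ∀ ω, p i ω ≤ 1)
    (hX_meas : ∀ i ∈ Icc 1 T, Measurable[F i] (X i))
    (hX_val : ∀ i ∈ Icc 1 T, ∀ ω, X i ω = 0 ∨ X i ω = 1)
    (hcond : ∀ i ∈ Icc 1 T, μ[X i|F (i - 1)] =ᵐ[μ] p i) :
    IsAdaptiveCoinProcess μ F ((Set.Iic T).indicator p) ((Set.Iic T).indicator X) := by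
  have hIcc {i : ℕ} (hi : i + 1 ∈ Set.Iic T) : i + 1 ∈ Icc 1 T := by simpa using hi
  constructor
  · intro i
    by_cases hi : i + 1 ∈ Set.Iic T
    · simpa [Set.indicator_of_mem hi] using hp_meas _ (hIcc hi)
    · rw [Set.indicator_of_notMem hi]; exact measurable_const
  · intro i ω
    by_cases hi : i + 1 ∈ Set.Iic T
    · simpa [Set.indicator_of_mem hi] using hp_le _ (hIcc hi) ω
    · simp [Set.indicator_of_notMem hi]
  · intro i
    by_cases hi : i + 1 ∈ Set.Iic T
    · simpa [Set.indicator_of_mem hi] using hX_meas _ (hIcc hi)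
    · rw [Set.indicator_of_notMem hi]; exact measurable_const
  · intro i ω
    by_cases hi : i + 1 ∈ Set.Iic T
    · simpa [Set.indicator_of_mem hi] using hX_val _ (hIcc hi) ω
    · simp [Set.indicator_of_notMem hi]
  · intro i
    by_cases hi : i + 1 ∈ Set.Iic T
    · simpa [Set.indicator_of_mem hi] using hcond _ (hIcc hi)
    · simp [Set.indicator_of_notMem hi]

end AdaptiveCoins

theorem stmt_5_general {Ω : Type*} {m : MeasurableSpace Ω} {μ : Measure Ω}
    [IsProbabilityMeasure μ]
    (T : ℕ) (F : Filtration ℕ m)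
    (p X : ℕ → Ω → ℝ)
    (hp_meas : ∀ i ∈ Finset.Icc 1 T, Measurable[F (i - 1)] (p i))
    (hp_range : ∀ i ∈ Finset.Icc 1 T, ∀ ω, p i ω ∈ Set.Icc (0 : ℝ) 1)
    (hX_meas : ∀ i ∈ Finset.Icc 1 T, Measurable[F i] (X i))
    (hX_val : ∀ i ∈ Finset.Icc 1 T, ∀ ω, X i ω = 0 ∨ X i ω = 1)
    (hcond : ∀ i ∈ Finset.Icc 1 T, μ[X i|F (i - 1)] =ᵐ[μ] p i)
    (y : ℝ) :
    μ {ω | y < ∑ i ∈ Finset.Icc 1 T, p i ω * ∏ j ∈ Finset.Icc 1 i, (1 - X j ω)}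
      ≤ ENNReal.ofReal (Real.exp (-y)) := by
  have h := AdaptiveCoins.isAdaptiveCoinProcess_indicator_Iic hp_meas
    (fun i hi ω ↦ (hp_range i hi ω).2) hX_meas hX_val hcond
  have := h.measure_lt_compensator_le T y
  rwa [AdaptiveCoins.compensator_indicator_Iic] at this

/-- The adaptive-coins martingale bound: in a `T`-round process where the bias `pᵢ ∈ [0,1]`
is chosen adaptively (measurable with respect to `F_{i-1}`) and the coin `Xᵢ ∈ {0,1}` is
`F_i`-measurable with `E[Xᵢ | F_{i-1}] = pᵢ`, letting `Nᵢ = ∏_{j≤i} (1 - Xⱼ)` indicate that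
no heads occurred in the first `i` steps and `Y = ∑_{i=1}^T pᵢ Nᵢ`, we have
`Pr[Y > y] ≤ exp(-y)` for every `y > 0`. -/
theorem stmt_5 {Ω : Type*} {m : MeasurableSpace Ω} {μ : Measure Ω}
    [IsProbabilityMeasure μ]
    (T : ℕ) (F : Filtration ℕ m)
    (p X : ℕ → Ω → ℝ)
    (hp_meas : ∀ i ∈ Finset.Icc 1 T, Measurable[F (i - 1)] (p i))
    (hp_range : ∀ i ∈ Finset.Icc 1 T, ∀ ω, p i ω ∈ Set.Icc (0 : ℝ) 1)
    (hX_meas : ∀ i ∈ Finset.Icc 1 T, Measurable[F i] (X i))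
    (hX_val : ∀ i ∈ Finset.Icc 1 T, ∀ ω, X i ω = 0 ∨ X i ω = 1)
    (hcond : ∀ i ∈ Finset.Icc 1 T, μ[X i|F (i - 1)] =ᵐ[μ] p i)
    (y : ℝ) (hy : 0 < y) :
    μ {ω | y < ∑ i ∈ Finset.Icc 1 T, p i ω * ∏ j ∈ Finset.Icc 1 i, (1 - X j ω)}
      ≤ ENNReal.ofReal (Real.exp (-y)) :=
  stmt_5_general T F p X hp_meas hp_range hX_meas hX_val hcond y
end

section
/- Let d ≥ 1, T ≥ 1, ρ > 0, 0 < c < 1/2, and η > 0 with (1−c)ηρ − η²/2 > 0. Let x^{(1)}, …, x^{(T)} ∈ {−1,1}^d and y^{(1)}, …, y^{(T)} ∈ {−1,1}, and suppose there exists v ∈ ℝ^d with v ≥ 0 coordinatewise, ‖v‖₁ = 1, and y^{(t)}⟨v, x^{(t)}⟩ ≥ ρ for every t ∈ [T]. Let U ⊆ [T] be a set of 'update rounds' and let w^{(0)}, …, w^{(T)} be vectors with w^{(0)} = (1/d, …, 1/d) such that for every t: if t ∉ U then w^{(t)} = w^{(t−1)}, and if t ∈ U then y^{(t)}⟨w^{(t−1)},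 x^{(t)}⟩ ≤ cρ and w^{(t)}_j = w^{(t−1)}_j · exp(η y^{(t)} x^{(t)}_j) / Σ_{k=1}^{d} w^{(t−1)}_k exp(η y^{(t)} x^{(t)}_k) for all j. Then |U| ≤ log d / ((1−c)ηρ − η²/2). -/
lemma aux_exp (u : ℝ) (hu : 0 ≤ u) : (1 - u) * Real.exp (2 * u) ≤ 1 + u := by
  have key : MonotoneOn (fun u : ℝ => 1 + u - (1 - u) * Real.exp (2 * u)) (Set.Ici 0) := by
    have hderiv : ∀ s : ℝ, HasDerivAt (fun u : ℝ => 1 + u - (1 - u) * Real.exp (2 * u))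
        (1 - ((-1) * Real.exp (2 * s) + (1 - s) * (Real.exp (2 * s) * 2))) s := by
      intro s
      have h1 : HasDerivAt (fun u : ℝ => Real.exp (2 * u)) (Real.exp (2 * s) * 2) s := by
        simpa [Function.comp_def] using (Real.hasDerivAt_exp (2 * s)).comp s ((hasDerivAt_id s).const_mul 2)
      have h2 : HasDerivAt (fun u : ℝ => 1 - u) (-1) s := by
        simpa using ((hasDerivAt_id s).const_sub 1)
      have h3 := h2.mul h1
      have h4 : HasDerivAt (fun u : ℝ => 1 + u) 1 s := by
        simpa using (hasDerivAt_id s).const_add 1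
      simpa [Pi.sub_def, Pi.mul_def] using h4.sub h3
    apply monotoneOn_of_deriv_nonneg (convex_Ici 0)
    · exact (Continuous.continuousOn (by continuity))
    · intro s _
      exact (hderiv s).differentiableAt.differentiableWithinAt
    · intro s hs
      rw [(hderiv s).deriv]
      have hs0 : 0 ≤ s := le_of_lt (by simpa using hs)
      have h5 : (-(2*s)) + 1 ≤ Real.exp (-(2*s)) := Real.add_one_le_exp _
      have h6 : 0 < Real.exp (2*s) := Real.exp_pos _
      have h7 : Real.exp (-(2*s)) * Real.exp (2*s) = 1 := by
        rw [← Real.exp_add]; simp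
      nlinarith
  have h0 : (fun u : ℝ => 1 + u - (1 - u) * Real.exp (2 * u)) 0 ≤
      (fun u : ℝ => 1 + u - (1 - u) * Real.exp (2 * u)) u :=
    key (Set.self_mem_Ici) (Set.mem_Ici.mpr hu) hu
  norm_num at h0
  linarith

lemma aux_sinh (η : ℝ) (hη : 0 ≤ η) : Real.sinh η ≤ η * Real.cosh η := by
  rw [Real.sinh_eq, Real.cosh_eq]
  have h := aux_exp η hη
  have hE : 0 < Real.exp η := Real.exp_pos _
  have hF : 0 < Real.exp (-η) := Real.exp_pos _
  have h1 : Real.exp η * Real.exp (-η) = 1 := by rw [← Real.exp_add]; simp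
  have h2 : Real.exp (2 * η) = Real.exp η * Real.exp η := by
    rw [← Real.exp_add]; ring_nf
  nlinarith

lemma aux_Z (a η : ℝ) (ha : 0 ≤ a) (hη : 0 ≤ η) :
    Real.cosh η + a * Real.sinh η ≤ Real.exp (a * η + η ^ 2 / 2) := by
  have h1 : Real.cosh η + a * Real.sinh η ≤ Real.cosh η * (1 + a * η) := by
    have := aux_sinh η hη
    nlinarith [Real.cosh_pos (x := η)]
  have h2 : Real.cosh η ≤ Real.exp (η ^ 2 / 2) := Real.cosh_le_exp_half_sq η
  have h3 : (1 : ℝ) + a * η ≤ Real.exp (a * η) := by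
    simpa [add_comm] using Real.add_one_le_exp (a * η)
  calc Real.cosh η + a * Real.sinh η ≤ Real.cosh η * (1 + a * η) := h1
    _ ≤ Real.exp (η ^ 2 / 2) * Real.exp (a * η) := by
        apply mul_le_mul h2 h3 (by positivity) (le_of_lt (Real.exp_pos _))
    _ = Real.exp (a * η + η ^ 2 / 2) := by rw [← Real.exp_add]; ring_nf
set_option maxHeartbeats 1000000 in
/-- Update bound for ConfidentWinnow: if the labeled examples `(x^{(t)}, y^{(t)})`,
`t = 1, …, T`, are consistent with a nonnegative `ℓ₁`-normalized weight vector `v` with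
margin `ρ`, the hypothesis vectors `w^{(t)}` start uniform, stay unchanged off the update
rounds `U`, and on each update round `t ∈ U` satisfy `y^{(t)}⟨w^{(t-1)}, x^{(t)}⟩ ≤ cρ` and
are updated multiplicatively with learning rate `η`, then
`|U| ≤ log d / ((1-c)ηρ - η²/2)`. -/
theorem stmt_7 (d T : ℕ) (hd : 1 ≤ d) (hT : 1 ≤ T)
    (ρ c η : ℝ) (hρ : 0 < ρ) (hc0 : 0 < c) (hc : c < 1 / 2) (hη : 0 < η)
    (hpos : 0 < (1 - c) * η * ρ - η ^ 2 / 2)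
    (x : ℕ → Fin d → ℝ) (y : ℕ → ℝ)
    (hx : ∀ t ∈ Finset.Icc 1 T, ∀ j, x t j = 1 ∨ x t j = -1)
    (hy : ∀ t ∈ Finset.Icc 1 T, y t = 1 ∨ y t = -1)
    (v : Fin d → ℝ) (hv0 : ∀ j, 0 ≤ v j) (hv1 : ∑ j, |v j| = 1)
    (hmargin : ∀ t ∈ Finset.Icc 1 T, ρ ≤ y t * ∑ j, v j * x t j)
    (U : Finset ℕ) (hU : U ⊆ Finset.Icc 1 T)
    (w : ℕ → Fin d → ℝ) (hw0 : ∀ j, w 0 j = 1 / d)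
    (hstay : ∀ t ∈ Finset.Icc 1 T, t ∉ U → w t = w (t - 1))
    (hupd : ∀ t ∈ U,
      (y t * ∑ j, w (t - 1) j * x t j ≤ c * ρ) ∧
      ∀ j, w t j = w (t - 1) j * Real.exp (η * y t * x t j) /
          ∑ k, w (t - 1) k * Real.exp (η * y t * x t k)) :
    (U.card : ℝ) ≤ Real.log d / ((1 - c) * η * ρ - η ^ 2 / 2) := by
  haveI : Nonempty (Fin d) := ⟨⟨0, hd⟩⟩
  have hd0 : (0 : ℝ) < d := by exact_mod_cast hd
  -- the weight vectors stay positive and normalized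
  have inv : ∀ t, t ≤ T → (∀ j, 0 < w t j) ∧ (∑ j, w t j) = 1 := by
    intro t
    induction t with
    | zero =>
      intro _
      constructor
      · intro j; rw [hw0]; positivity
      · simp only [hw0]
        rw [Finset.sum_const, Finset.card_univ, Fintype.card_fin, nsmul_eq_mul]
        field_simp
    | succ t ih =>
      intro h
      have ht : t ≤ T := Nat.le_of_succ_le h
      have hmem : t + 1 ∈ Finset.Icc 1 T := by
        rw [Finset.mem_Icc]; omega
      obtain ⟨hposw, hsum⟩ := ih ht
      by_cases hu : t + 1 ∈ U
      · obtain ⟨_, hw⟩ := hupd _ hu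
        simp only [Nat.add_sub_cancel] at hw
        have hZ : 0 < ∑ k, w t k * Real.exp (η * y (t+1) * x (t+1) k) :=
          Finset.sum_pos (fun k _ => mul_pos (hposw k) (Real.exp_pos _))
            Finset.univ_nonempty
        constructor
        · intro j
          rw [hw j]
          exact div_pos (mul_pos (hposw j) (Real.exp_pos _)) hZ
        · simp only [hw]
          rw [← Finset.sum_div, div_self hZ.ne']
      · have := hstay _ hmem hu
        simp only [Nat.add_sub_cancel] at this
        rw [this]
        exact ⟨hposw, hsum⟩
  have hvsum : ∑ j, v j = 1 := by
    rw [← hv1]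
    exact Finset.sum_congr rfl fun j _ => (abs_of_nonneg (hv0 j)).symm
  -- potential step on update rounds
  have step : ∀ t ∈ U,
      (∑ j, v j * Real.log (w (t-1) j)) + ((1 - c) * η * ρ - η ^ 2 / 2)
        ≤ ∑ j, v j * Real.log (w t j) := by
    intro t htU
    have htT : t ∈ Finset.Icc 1 T := hU htU
    have ht1 : 1 ≤ t ∧ t ≤ T := Finset.mem_Icc.mp htT
    obtain ⟨hposw, hsum⟩ := inv (t-1) (by omega)
    obtain ⟨hconf, hw⟩ := hupd t htU
    set Z := ∑ k, w (t-1) k * Real.exp (η * y t * x t k) with hZdef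
    have hZpos : 0 < Z :=
      Finset.sum_pos (fun k _ => mul_pos (hposw k) (Real.exp_pos _))
        Finset.univ_nonempty
    set m := y t * ∑ j, w (t-1) j * x t j with hmdef
    have hterm : ∀ k, Real.exp (η * y t * x t k)
        = Real.cosh η + (y t * x t k) * Real.sinh η := by
      intro k
      rcases hy t htT with h1 | h1 <;> rcases hx t htT k with h2 | h2 <;>
        rw [h1, h2] <;> ring_nf <;>
        nlinarith [Real.cosh_add_sinh η, Real.cosh_sub_sinh η]
    have hZeq : Z = Real.cosh η + m * Real.sinh η := by
      calc Z = ∑ k, (w (t-1) k * Real.cosh η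
          + y t * Real.sinh η * (w (t-1) k * x t k)) := by
            refine Finset.sum_congr rfl fun k _ => ?_
            rw [hterm k]; ring
        _ = (∑ k, w (t-1) k) * Real.cosh η
            + y t * Real.sinh η * ∑ k, w (t-1) k * x t k := by
            rw [Finset.sum_add_distrib, ← Finset.sum_mul, ← Finset.mul_sum]
        _ = Real.cosh η + m * Real.sinh η := by rw [hsum, hmdef]; ring
    have hsinh : 0 ≤ Real.sinh η := (Real.sinh_pos_iff.mpr hη).le
    have hZle : Z ≤ Real.exp (c * ρ * η + η ^ 2 / 2) := by
      have h1 : Z ≤ Real.cosh η + (c * ρ) * Real.sinh η := by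
        rw [hZeq]
        have := mul_le_mul_of_nonneg_right hconf hsinh
        linarith
      exact le_trans h1 (aux_Z (c * ρ) η (by positivity) hη.le)
    have hlogZ : Real.log Z ≤ c * ρ * η + η ^ 2 / 2 :=
      (Real.log_le_iff_le_exp hZpos).mpr hZle
    have hmarg := hmargin t htT
    have hPhi : ∑ j, v j * Real.log (w t j)
        = (∑ j, v j * Real.log (w (t-1) j))
          + η * (y t * ∑ j, v j * x t j) - Real.log Z := by
      have h1 : ∀ j, v j * Real.log (w t j)
          = v j * Real.log (w (t-1) j) + η * y t * (v j * x t j)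
            - v j * Real.log Z := by
        intro j
        rw [hw j, Real.log_div (mul_pos (hposw j) (Real.exp_pos _)).ne' hZpos.ne',
          Real.log_mul (hposw j).ne' (Real.exp_pos _).ne', Real.log_exp]
        ring
      rw [Finset.sum_congr rfl fun j _ => h1 j]
      rw [Finset.sum_sub_distrib, Finset.sum_add_distrib, ← Finset.mul_sum,
        ← Finset.sum_mul, hvsum, one_mul]
      ring
    rw [hPhi]
    have h2 : η * ρ ≤ η * (y t * ∑ j, v j * x t j) :=
      mul_le_mul_of_nonneg_left hmarg hη.le
    linarith [h2, hlogZ]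
  -- telescoping
  have tele : ∀ t, t ≤ T →
      (∑ j, v j * Real.log (w 0 j))
        + ((U ∩ Finset.Icc 1 t).card : ℝ) * ((1 - c) * η * ρ - η ^ 2 / 2)
        ≤ ∑ j, v j * Real.log (w t j) := by
    intro t
    induction t with
    | zero =>
      intro _
      rw [Finset.Icc_eq_empty (by omega), Finset.inter_empty]
      simp
    | succ t ih =>
      intro h
      have ht : t ≤ T := Nat.le_of_succ_le h
      have hmem : t + 1 ∈ Finset.Icc 1 T := by rw [Finset.mem_Icc]; omega
      by_cases hu : t + 1 ∈ U
      · have hins : U ∩ Finset.Icc 1 (t+1) = insert (t+1) (U ∩ Finset.Icc 1 t) := by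
          ext s
          simp only [Finset.mem_inter, Finset.mem_Icc, Finset.mem_insert]
          constructor
          · rintro ⟨hsU, h1, h2⟩
            rcases Nat.lt_or_ge s (t+1) with hlt | hge
            · exact Or.inr ⟨hsU, h1, by omega⟩
            · exact Or.inl (by omega)
          · rintro (rfl | ⟨hsU, h1, h2⟩)
            · exact ⟨hu, by omega, le_rfl⟩
            · exact ⟨hsU, h1, by omega⟩
        have hnot : t + 1 ∉ U ∩ Finset.Icc 1 t := by
          simp only [Finset.mem_inter, Finset.mem_Icc]
          rintro ⟨_, _, h2⟩; omega
        have hcard : ((U ∩ Finset.Icc 1 (t+1)).card : ℝ)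
            = ((U ∩ Finset.Icc 1 t).card : ℝ) + 1 := by
          rw [hins, Finset.card_insert_of_notMem hnot]
          push_cast; ring
        have hstep := step (t+1) hu
        simp only [Nat.add_sub_cancel] at hstep
        rw [hcard]
        linarith [ih ht]
      · have hEq : U ∩ Finset.Icc 1 (t+1) = U ∩ Finset.Icc 1 t := by
          ext s
          simp only [Finset.mem_inter, Finset.mem_Icc]
          constructor
          · rintro ⟨hsU, h1, h2⟩
            refine ⟨hsU, h1, ?_⟩
            rcases Nat.lt_or_ge s (t+1) with hlt | hge
            · omega
            · have : s = t + 1 := by omega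
              subst this; exact absurd hsU hu
          · rintro ⟨hsU, h1, h2⟩; exact ⟨hsU, h1, by omega⟩
        have hwEq := hstay _ hmem hu
        simp only [Nat.add_sub_cancel] at hwEq
        rw [hwEq, hEq]
        exact ih ht
  have hfin := tele T le_rfl
  rw [Finset.inter_eq_left.mpr hU] at hfin
  -- Φ 0 = - log d
  have hPhi0 : ∑ j, v j * Real.log (w 0 j) = - Real.log d := by
    simp only [hw0]
    rw [← Finset.sum_mul, hvsum, one_mul, one_div, Real.log_inv]
  -- Φ T ≤ 0
  obtain ⟨hposT, hsumT⟩ := inv T le_rfl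
  have hPhiT : ∑ j, v j * Real.log (w T j) ≤ 0 := by
    apply Finset.sum_nonpos
    intro j _
    apply mul_nonpos_of_nonneg_of_nonpos (hv0 j)
    apply Real.log_nonpos (hposT j).le
    calc w T j ≤ ∑ k, w T k :=
          Finset.single_le_sum (fun k _ => (hposT k).le) (Finset.mem_univ j)
      _ = 1 := hsumT
  rw [hPhi0] at hfin
  rw [le_div_iff₀ hpos]
  linarith
end

section
/- Let v, w be probability vectors on [d] with w_j > 0 for all j, let x ∈ {−1,1}^d, y ∈ {−1,1}, ρ > 0, c ∈ (0,1), and η > 0. Assume y⟨v,x⟩ ≥ ρ and y⟨w,x⟩ ≤ cρ. Define the multiplicative weight update w'_j = w_j · exp(η y x_j) / Σ_{k=1}^{d} w_k exp(η y x_k). Then the relative entropy potential φ(u) = Σ_{i=1}^{d} v_i log(v_i / u_i) satisfies φ(w') − φ(w) ≤ η²/2 − (1−c)ηρ. -/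
open Real

private lemma Zpos {m : ℝ} (hm : |m| ≤ 1) (t : ℝ) : 0 < Real.cosh t + m * Real.sinh t := by
  have h1 : |Real.sinh t| < Real.cosh t := by
    have := Real.cosh_sq t
    have hc := Real.cosh_pos t
    nlinarith [sq_abs (Real.sinh t), abs_nonneg (Real.sinh t)]
  have : |m * Real.sinh t| ≤ |Real.sinh t| := by
    rw [abs_mul]
    calc |m| * |Real.sinh t| ≤ 1 * |Real.sinh t| :=
      mul_le_mul_of_nonneg_right hm (abs_nonneg _)
    _ = |Real.sinh t| := one_mul _
  have := neg_abs_le (m * Real.sinh t)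
  linarith

private lemma mono_aux {f f' : ℝ → ℝ} (hf : ∀ t, HasDerivAt f (f' t) t)
    (h0 : ∀ t, 0 ≤ f' t) {a : ℝ} (ha : 0 ≤ a) : f 0 ≤ f a := by
  rcases eq_or_lt_of_le ha with h | h
  · rw [← h]
  · have : MonotoneOn f (Set.Icc 0 a) := by
      apply monotoneOn_of_deriv_nonneg (convex_Icc 0 a)
      · exact fun t _ => (hf t).differentiableAt.continuousAt.continuousWithinAt
      · exact fun t _ => (hf t).differentiableAt.differentiableWithinAt
      · intro t _
        rw [(hf t).deriv]; exact h0 t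
    exact this (Set.left_mem_Icc.2 ha) (Set.right_mem_Icc.2 ha) ha

/-- Hoeffding-type bound. -/
private lemma hoeffding {m : ℝ} (hm : |m| ≤ 1) {a : ℝ} (ha : 0 ≤ a) :
    Real.log (Real.cosh a + m * Real.sinh a) ≤ a * m + a ^ 2 / 2 := by
  set Z : ℝ → ℝ := fun t => Real.cosh t + m * Real.sinh t with hZ
  set N : ℝ → ℝ := fun t => Real.sinh t + m * Real.cosh t with hN
  have hZpos : ∀ t, 0 < Z t := fun t => Zpos hm t
  have hZd : ∀ t, HasDerivAt Z (N t) t := fun t => by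
    exact (Real.hasDerivAt_cosh t).add ((Real.hasDerivAt_sinh t).const_mul m)
  have hNd : ∀ t, HasDerivAt N (Z t) t := fun t => by
    exact (Real.hasDerivAt_sinh t).add ((Real.hasDerivAt_cosh t).const_mul m)
  set g : ℝ → ℝ := fun t => t * m + t ^ 2 / 2 - Real.log (Z t) with hg
  set g' : ℝ → ℝ := fun t => m + t - N t / Z t with hg'
  have hgd : ∀ t, HasDerivAt g (g' t) t := by
    intro t
    have h1 : HasDerivAt (fun t : ℝ => t * m + t ^ 2 / 2) (m + t) t := by
      have := ((hasDerivAt_id t).mul_const m).add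
        (((hasDerivAt_pow 2 t)).div_const 2)
      exact this.congr_deriv (by norm_num)
    have h2 : HasDerivAt (fun t => Real.log (Z t)) (N t / Z t) t :=
      (hZd t).log (ne_of_gt (hZpos t))
    exact h1.sub h2
  have hg'd : ∀ t, HasDerivAt g' ((N t) ^ 2 / (Z t) ^ 2) t := by
    intro t
    have h1 : HasDerivAt (fun t : ℝ => m + t) 1 t := by
      simpa using (hasDerivAt_id t).const_add m
    have h2 : HasDerivAt (fun t => N t / Z t)
        ((Z t * Z t - N t * N t) / (Z t) ^ 2) t :=
      (hNd t).div (hZd t) (ne_of_gt (hZpos t))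
    have := h1.sub h2
    have hz : Z t ≠ 0 := ne_of_gt (hZpos t)
    have heq : 1 - (Z t * Z t - N t * N t) / (Z t) ^ 2 = (N t) ^ 2 / (Z t) ^ 2 := by
      field_simp
      ring
    rwa [heq] at this
  have hg'0 : ∀ t, 0 ≤ t → 0 ≤ g' t := by
    intro t ht
    have h1 : g' 0 ≤ g' t := by
      have := mono_aux hg'd (fun s => by positivity) ht
      exact this
    have h2 : g' 0 = 0 := by
      simp [hg', hN, hZ]
    linarith
  have hmain : g 0 ≤ g a := by
    -- restrict monotone argument to nonneg derivative on [0,a]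
    rcases eq_or_lt_of_le ha with h | h
    · rw [← h]
    · have : MonotoneOn g (Set.Icc 0 a) := by
        apply monotoneOn_of_deriv_nonneg (convex_Icc 0 a)
        · exact fun t _ => (hgd t).differentiableAt.continuousAt.continuousWithinAt
        · exact fun t _ => (hgd t).differentiableAt.differentiableWithinAt
        · intro t ht
          rw [(hgd t).deriv]
          exact hg'0 t (le_of_lt (Set.mem_Ioo.1 (by simpa using ht)).1)
      exact this (Set.left_mem_Icc.2 ha) (Set.right_mem_Icc.2 ha) ha
  have hg0 : g 0 = 0 := by simp [hg, hZ]
  have : 0 ≤ g a := by linarith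
  simp only [hg, hZ] at this
  linarith

/-- One multiplicative-weights update of ConfidentWinnow decreases the relative-entropy
potential `φ(u) = ∑ᵢ vᵢ log(vᵢ/uᵢ)` by at least `(1-c)ηρ - η²/2`, whenever the target
probability vector `v` has margin `ρ` on `(x,y)` and the current hypothesis `w` predicts
unconfidently or incorrectly (`y⟨w,x⟩ ≤ cρ`). -/
theorem stmt_8 (d : ℕ) (hd : 0 < d) (v w x : Fin d → ℝ) (y ρ c η : ℝ)
    (hv0 : ∀ j, 0 ≤ v j) (hv1 : ∑ j, v j = 1)
    (hw0 : ∀ j, 0 < w j) (hw1 : ∑ j, w j = 1)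
    (hx : ∀ j, x j = 1 ∨ x j = -1) (hy : y = 1 ∨ y = -1)
    (hρ : 0 < ρ) (hc0 : 0 < c) (hc1 : c < 1) (hη : 0 < η)
    (hmargin : ρ ≤ y * ∑ j, v j * x j)
    (hconf : y * ∑ j, w j * x j ≤ c * ρ) :
    (∑ i, v i * Real.log (v i /
        (w i * Real.exp (η * y * x i) / ∑ k, w k * Real.exp (η * y * x k))))
      - (∑ i, v i * Real.log (v i / w i))
      ≤ η ^ 2 / 2 - (1 - c) * η * ρ := by
  set M : ℝ := y * ∑ j, w j * x j with hM
  set S : ℝ := ∑ k, w k * Real.exp (η * y * x k) with hS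
  -- each exp term equals cosh + (y x) sinh
  have hyx : ∀ j, y * x j = 1 ∨ y * x j = -1 := by
    intro j
    rcases hy with h | h <;> rcases hx j with h' | h' <;> simp [h, h']
  have hexp : ∀ j, Real.exp (η * y * x j)
      = Real.cosh η + (y * x j) * Real.sinh η := by
    intro j
    rcases hyx j with h | h
    · rw [mul_assoc, h, mul_one, one_mul, Real.cosh_add_sinh]
    · rw [mul_assoc, h, mul_neg_one, ← Real.cosh_sub_sinh]
      ring
  have hSval : S = Real.cosh η + M * Real.sinh η := by
    rw [hS]
    calc ∑ k, w k * Real.exp (η * y * x k)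
        = ∑ k, (w k * Real.cosh η + (w k * x k) * (y * Real.sinh η)) := by
          refine Finset.sum_congr rfl fun k _ => ?_
          rw [hexp k]; ring
      _ = (∑ k, w k) * Real.cosh η + (∑ k, w k * x k) * (y * Real.sinh η) := by
          rw [Finset.sum_add_distrib, ← Finset.sum_mul, ← Finset.sum_mul]
      _ = Real.cosh η + M * Real.sinh η := by rw [hw1, hM]; ring
  have hMabs : |M| ≤ 1 := by
    have h1 : ∀ k, w k * (y * x k) ≤ w k := by
      intro k
      rcases hyx k with h | h <;> rw [h] <;> nlinarith [hw0 k]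
    have h2 : ∀ k, -(w k) ≤ w k * (y * x k) := by
      intro k
      rcases hyx k with h | h <;> rw [h] <;> nlinarith [hw0 k]
    have hMeq : M = ∑ k, w k * (y * x k) := by
      rw [hM, Finset.mul_sum]
      exact Finset.sum_congr rfl fun k _ => by ring
    rw [abs_le, hMeq]
    constructor
    · calc -(1:ℝ) = ∑ k, -(w k) := by rw [Finset.sum_neg_distrib, hw1]
        _ ≤ _ := Finset.sum_le_sum fun k _ => h2 k
    · calc ∑ k, w k * (y * x k) ≤ ∑ k, w k := Finset.sum_le_sum fun k _ => h1 k
        _ = 1 := hw1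
  have hSpos : 0 < S := by
    rw [hSval]; exact Zpos hMabs η
  have hlogS : Real.log S ≤ η * M + η ^ 2 / 2 := by
    rw [hSval]; exact hoeffding hMabs hη.le
  -- rewrite the potential difference
  have hdiff : (∑ i, v i * Real.log (v i /
        (w i * Real.exp (η * y * x i) / S)))
      - (∑ i, v i * Real.log (v i / w i))
      = Real.log S - η * (y * ∑ j, v j * x j) := by
    rw [← Finset.sum_sub_distrib]
    have hpt : ∀ i, v i * Real.log (v i / (w i * Real.exp (η * y * x i) / S))
        - v i * Real.log (v i / w i) = v i * (Real.log S - η * y * x i) := by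
      intro i
      rcases (hv0 i).eq_or_lt with h | h
      · simp [← h]
      · have hwi := hw0 i
        have hei : (0:ℝ) < Real.exp (η * y * x i) := Real.exp_pos _
        rw [Real.log_div (ne_of_gt h) (by positivity),
            Real.log_div (ne_of_gt h) (ne_of_gt hwi),
            Real.log_div (by positivity) (ne_of_gt hSpos),
            Real.log_mul (ne_of_gt hwi) (ne_of_gt hei), Real.log_exp]
        ring
    rw [Finset.sum_congr rfl fun i _ => hpt i]
    calc ∑ i, v i * (Real.log S - η * y * x i)
        = ∑ i, (v i * Real.log S - (v i * x i) * (η * y)) :=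
          Finset.sum_congr rfl fun i _ => by ring
      _ = (∑ i, v i) * Real.log S - (∑ i, v i * x i) * (η * y) := by
          rw [Finset.sum_sub_distrib, ← Finset.sum_mul, ← Finset.sum_mul]
      _ = Real.log S - η * (y * ∑ j, v j * x j) := by rw [hv1]; ring
  rw [hdiff]
  nlinarith [hlogS, hconf, hmargin, hη]
end

section
/- There exists a universal constant κ > 0 such that the following holds. For all positive integers d, r, D and every monotone 1-decision list f over d variables of length r whose sequence of output bits alternates between +1 and −1 at most D times, there exists a weight vector v ∈ ℝ^{d+1} with ‖v‖₁ = 1 such that for every x ∈ {−1,1}^d, sgn(⟨v, (x,1)⟩) = f(x) and |⟨v, (x,1)⟩| ≥ κ / r^D. -/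
/-- Evaluate a monotone 1-decision list given as a list of rules `(ℓᵢ, bᵢ)` (variable index
and output bit in `{-1,1}`) together with a final default bit: output `bᵢ` for the least `i`
such that coordinate `ℓᵢ` of the input equals `1`, and the default bit otherwise. -/
noncomputable def evalMDL {d : ℕ} : List (Fin d × ℝ) → ℝ → (Fin d → ℝ) → ℝ
  | [], bdef, _ => bdef
  | (i, b) :: rest, bdef, x => if x i = 1 then b else evalMDL rest bdef x

/-- The number of alternations in a sequence of bits: the number of consecutive indices at
which the value changes. -/
noncomputable def altCount : List ℝ → ℕ
  | [] => 0
  | [_] => 0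
  | a :: b :: rest => (if a ≠ b then 1 else 0) + altCount (b :: rest)

noncomputable def wts : List ℝ → ℝ → List ℝ
  | [], _ => []
  | b :: rest, bdef =>
      (if b = rest.headD bdef then (wts rest bdef).headD 0
       else 3 + (wts rest bdef).sum) :: wts rest bdef

lemma wts_nonneg : ∀ (bits : List ℝ) (bdef : ℝ), ∀ c ∈ wts bits bdef, 0 ≤ c := by
  intro bits
  induction bits with
  | nil => intro bdef c hc; simp [wts] at hc
  | cons b rest ih =>
      intro bdef c hc
      simp only [wts, List.mem_cons] at hc
      rcases hc with rfl | hc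
      · split
        · rcases h : wts rest bdef with _ | ⟨c0, t⟩
          · simp
          · have := ih bdef c0 (by rw [h]; exact List.mem_cons_self)
            simpa [h] using this
        · have : 0 ≤ (wts rest bdef).sum :=
            List.sum_nonneg (fun c hc => ih bdef c hc)
          linarith
      · exact ih bdef c hc

lemma wts_sum_nonneg (bits : List ℝ) (bdef : ℝ) : 0 ≤ (wts bits bdef).sum :=
  List.sum_nonneg (fun c hc => wts_nonneg bits bdef c hc)

lemma wts_head_nonneg (bits : List ℝ) (bdef : ℝ) : 0 ≤ (wts bits bdef).headD 0 := by
  rcases h : wts bits bdef with _ | ⟨c0, t⟩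
  · simp
  · simpa using wts_nonneg bits bdef c0 (by rw [h]; exact List.mem_cons_self)

noncomputable def opp : List ℝ → ℝ → ℝ → ℝ
  | [], bdef, h => if bdef = h then 0 else 2
  | b :: rest, bdef, h =>
      (if b = h then 0 else (wts (b :: rest) bdef).headD 0) + opp rest bdef h

lemma opp_nonneg (bits : List ℝ) (bdef h : ℝ) : 0 ≤ opp bits bdef h := by
  induction bits with
  | nil => simp only [opp]; split <;> norm_num
  | cons b rest ih =>
      have h1 : 0 ≤ (if b = h then (0:ℝ) else (wts (b :: rest) bdef).headD 0) := by
        split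
        · exact le_refl 0
        · exact wts_head_nonneg _ _
      simpa [opp] using add_nonneg h1 ih

lemma opp_le (bits : List ℝ) (bdef h : ℝ) :
    opp bits bdef h ≤ (wts bits bdef).sum + 2 := by
  induction bits with
  | nil => simp only [opp, wts]; split <;> norm_num
  | cons b rest ih =>
      have hw : (wts (b :: rest) bdef).sum
          = (wts (b :: rest) bdef).headD 0 + (wts rest bdef).sum := by
        simp [wts]
      have h1 : (if b = h then (0:ℝ) else (wts (b :: rest) bdef).headD 0)
          ≤ (wts (b :: rest) bdef).headD 0 := by
        split
        · exact wts_head_nonneg _ _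
        · exact le_refl _
      simp only [opp]
      rw [hw]
      linarith

lemma K1 (bits : List ℝ) (bdef : ℝ) :
    ((wts bits bdef).headD 0 = 0 ∧ opp bits bdef (bits.headD bdef) = 0) ∨
      1 + opp bits bdef (bits.headD bdef) ≤ (wts bits bdef).headD 0 := by
  induction bits with
  | nil => left; constructor <;> simp [wts, opp]
  | cons b rest ih =>
      by_cases hb : b = rest.headD bdef
      · have hc : (wts (b :: rest) bdef).headD 0 = (wts rest bdef).headD 0 := by
          simp [wts, hb]
        have hopp : opp (b :: rest) bdef ((b :: rest).headD bdef)
            = opp rest bdef (rest.headD bdef) := by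
          simp only [List.headD_cons, opp, if_pos rfl, ← hb, if_true, zero_add]
        rw [hc, hopp]
        exact ih
      · right
        have hc : (wts (b :: rest) bdef).headD 0 = 3 + (wts rest bdef).sum := by
          simp only [wts, if_neg hb, List.headD_cons]
        have hopp : opp (b :: rest) bdef ((b :: rest).headD bdef)
            = opp rest bdef b := by
          simp only [List.headD_cons, opp, if_pos rfl, if_true, zero_add]
        rw [hc, hopp]
        have := opp_le rest bdef b
        linarith

lemma altCount_cons' (b : ℝ) (rest : List ℝ) (bdef : ℝ) :
    altCount (b :: (rest ++ [bdef]))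
      = (if b ≠ rest.headD bdef then 1 else 0) + altCount (rest ++ [bdef]) := by
  cases rest <;> rfl

lemma wts_zero (bits : List ℝ) (bdef : ℝ) (h : altCount (bits ++ [bdef]) = 0) :
    (wts bits bdef).headD 0 = 0 ∧ (wts bits bdef).sum = 0 := by
  induction bits with
  | nil => simp [wts]
  | cons b rest ih =>
      rw [List.cons_append, altCount_cons'] at h
      have h2 : altCount (rest ++ [bdef]) = 0 := by omega
      have h1 : b = rest.headD bdef := by
        by_contra hb
        rw [if_pos hb] at h; omega
      obtain ⟨ihh, ihs⟩ := ih h2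
      have hw : wts (b :: rest) bdef = (wts rest bdef).headD 0 :: wts rest bdef := by
        simp only [wts, if_pos h1]
      rw [hw]
      constructor
      · rw [List.headD_cons]; exact ihh
      · rw [List.sum_cons, ihh, ihs, add_zero]

lemma wts_PQ (bits : List ℝ) (bdef : ℝ) :
    (wts bits bdef).sum + 3 ≤ 3 * ((bits.length : ℝ) + 1) ^ (altCount (bits ++ [bdef])) ∧
    (wts bits bdef).headD 0 * ((bits.length : ℝ) + 1)
      ≤ 3 * ((bits.length : ℝ) + 1) ^ (altCount (bits ++ [bdef])) := by
  induction bits with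
  | nil => simp [wts, altCount]
  | cons b rest ih =>
      obtain ⟨ihP, ihQ⟩ := ih
      set n' : ℝ := (rest.length : ℝ) with hn'
      have hn0 : (0:ℝ) ≤ n' := Nat.cast_nonneg _
      have hN1 : (1:ℝ) ≤ n' + 1 := by linarith
      have hlen : (((b :: rest).length : ℝ) + 1) = n' + 1 + 1 := by
        push_cast [List.length_cons]; ring
      set A' := altCount (rest ++ [bdef]) with hA'
      clear_value A'
      have hsum' : 0 ≤ (wts rest bdef).sum := wts_sum_nonneg rest bdef
      have hhd' : 0 ≤ (wts rest bdef).headD 0 := wts_head_nonneg rest bdef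
      have hpowmono : (n' + 1) ^ A' ≤ (n' + 1 + 1) ^ A' :=
        pow_le_pow_left₀ (by linarith) (by linarith) A'
      by_cases hb : b = rest.headD bdef
      · have hA : altCount ((b :: rest) ++ [bdef]) = A' := by
          rw [List.cons_append, altCount_cons', if_neg (by simpa using hb)]
          omega
        have hw : wts (b :: rest) bdef
            = (wts rest bdef).headD 0 :: wts rest bdef := by
          simp only [wts]
          rw [if_pos hb]
        rw [hA, hlen, hw]
        simp only [List.sum_cons, List.headD_cons]
        rcases Nat.eq_zero_or_pos A' with hA0 | hApos
        · have hz := wts_zero rest bdef (by rw [← hA']; exact hA0)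
          rw [hz.1, hA0] at *
          simp only [pow_zero, mul_one] at *
          constructor <;> [linarith; linarith]
        · obtain ⟨A'', rfl⟩ : ∃ A'', A' = A'' + 1 := ⟨A' - 1, by omega⟩
          have hq : (wts rest bdef).headD 0 ≤ 3 * (n' + 1) ^ A'' := by
            have h1 : (wts rest bdef).headD 0 * (n' + 1)
                ≤ 3 * (n' + 1) ^ A'' * (n' + 1) := by
              calc (wts rest bdef).headD 0 * (n' + 1) ≤ 3 * (n' + 1) ^ (A'' + 1) := ihQ
                _ = 3 * (n' + 1) ^ A'' * (n' + 1) := by ring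
            exact le_of_mul_le_mul_right h1 (by linarith)
          have hpm2 : (n' + 1) ^ A'' ≤ (n' + 1 + 1) ^ A'' :=
            pow_le_pow_left₀ (by linarith) (by linarith) A''
          constructor
          · have key : 3 * (n' + 1) ^ A'' + 3 * (n' + 1) ^ (A'' + 1)
                ≤ 3 * (n' + 1 + 1) ^ (A'' + 1) := by
              have : 3 * (n' + 1) ^ A'' + 3 * (n' + 1) ^ (A'' + 1)
                  = 3 * (n' + 1) ^ A'' * (n' + 1 + 1) := by ring
              rw [this, pow_succ]
              have : 3 * (n' + 1) ^ A'' * (n' + 1 + 1)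
                  ≤ 3 * (n' + 1 + 1) ^ A'' * (n' + 1 + 1) := by
                have h3 : (0:ℝ) < n' + 1 + 1 := by linarith
                nlinarith
              linarith [this]
            linarith
          · calc (wts rest bdef).headD 0 * (n' + 1 + 1)
                ≤ 3 * (n' + 1) ^ A'' * (n' + 1 + 1) := by nlinarith
              _ ≤ 3 * (n' + 1 + 1) ^ A'' * (n' + 1 + 1) := by nlinarith
              _ = 3 * (n' + 1 + 1) ^ (A'' + 1) := by ring
      · have hA : altCount ((b :: rest) ++ [bdef]) = A' + 1 := by
          rw [List.cons_append, altCount_cons', if_pos (by simpa using hb)]; omega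
        have hw : wts (b :: rest) bdef
            = (3 + (wts rest bdef).sum) :: wts rest bdef := by
          simp only [wts]
          rw [if_neg hb]
        rw [hA, hlen, hw]
        simp only [List.sum_cons, List.headD_cons]
        have hP' : (wts rest bdef).sum + 3 ≤ 3 * (n' + 1) ^ A' := ihP
        have key : 3 * (n' + 1) ^ A' * (n' + 1 + 1) ≤ 3 * (n' + 1 + 1) ^ (A' + 1) := by
          rw [pow_succ]
          nlinarith
        constructor
        · have h2 : (3 + (wts rest bdef).sum) + (wts rest bdef).sum + 3
              ≤ 2 * (3 * (n' + 1) ^ A') := by linarith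
          have h3 : 2 * (3 * (n' + 1) ^ A') ≤ 3 * (n' + 1 + 1) ^ (A' + 1) := by
            have hp : (0:ℝ) ≤ (n' + 1) ^ A' := by positivity
            nlinarith
          linarith
        · have : (3 + (wts rest bdef).sum) * (n' + 1 + 1)
              ≤ 3 * (n' + 1) ^ A' * (n' + 1 + 1) := by nlinarith
          linarith

noncomputable def dlsum {d : ℕ} : List (Fin d × ℝ) → ℝ → (Fin d → ℝ) → ℝ
  | [], bdef, _ => bdef
  | (l, b) :: rest, bdef, x =>
      (if x l = 1 then b * (wts (b :: rest.map Prod.snd) bdef).headD 0 else 0)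
        + dlsum rest bdef x

lemma evalMDL_pm {d : ℕ} (L : List (Fin d × ℝ)) (bdef : ℝ)
    (hb : ∀ p ∈ L, p.2 = 1 ∨ p.2 = -1) (hdef : bdef = 1 ∨ bdef = -1)
    (x : Fin d → ℝ) : evalMDL L bdef x = 1 ∨ evalMDL L bdef x = -1 := by
  induction L with
  | nil => simpa [evalMDL] using hdef
  | cons p rest ih =>
      obtain ⟨l, b⟩ := p
      simp only [evalMDL]
      split
      · exact hb (l, b) (List.mem_cons_self)
      · exact ih (fun q hq => hb q (List.mem_cons_of_mem _ hq))

lemma M2 {d : ℕ} (L : List (Fin d × ℝ)) (bdef h : ℝ)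
    (hb : ∀ p ∈ L, p.2 = 1 ∨ p.2 = -1) (hdef : bdef = 1 ∨ bdef = -1)
    (hh : h = 1 ∨ h = -1) (x : Fin d → ℝ) :
    1 - opp (L.map Prod.snd) bdef h ≤ h * dlsum L bdef x := by
  induction L with
  | nil =>
      simp only [List.map_nil, opp, dlsum]
      rcases hdef with rfl | rfl <;> rcases hh with rfl | rfl <;> norm_num
  | cons p rest ih =>
      obtain ⟨l, b⟩ := p
      have ih' := ih (fun q hq => hb q (List.mem_cons_of_mem _ hq))
      have hbb : b = 1 ∨ b = -1 := hb (l, b) (List.mem_cons_self)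
      set c := (wts (b :: rest.map Prod.snd) bdef).headD 0 with hc
      have hcn : 0 ≤ c := wts_head_nonneg _ _
      have hopp : opp (((l, b) :: rest).map Prod.snd) bdef h
          = (if b = h then 0 else c) + opp (rest.map Prod.snd) bdef h := by
        simp only [List.map_cons, opp, hc]
      have hdl : dlsum ((l, b) :: rest) bdef x
          = (if x l = 1 then b * c else 0) + dlsum rest bdef x := by
        simp only [dlsum, hc]
      rw [hopp, hdl]
      by_cases hxl : x l = 1
      · rw [if_pos hxl]
        by_cases hbh : b = h
        · rw [if_pos hbh, hbh]
          have : h * (h * c + dlsum rest bdef x) = c + h * dlsum rest bdef x := by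
            rcases hh with rfl | rfl <;> ring
          rw [this]
          linarith
        · rw [if_neg hbh]
          have hbh' : h * b = -1 := by
            rcases hh with rfl | rfl <;> rcases hbb with rfl | rfl <;> simp_all <;> norm_num
          have : h * (b * c + dlsum rest bdef x) = -c + h * dlsum rest bdef x := by
            rw [mul_add, ← mul_assoc, hbh']; ring
          rw [this]
          linarith
      · rw [if_neg hxl, zero_add]
        have hterm : 0 ≤ (if b = h then 0 else c) := by split <;> [exact le_refl 0; exact hcn]
        linarith

lemma M1 {d : ℕ} (L : List (Fin d × ℝ)) (bdef : ℝ)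
    (hb : ∀ p ∈ L, p.2 = 1 ∨ p.2 = -1) (hdef : bdef = 1 ∨ bdef = -1)
    (x : Fin d → ℝ) :
    1 ≤ dlsum L bdef x * evalMDL L bdef x := by
  induction L with
  | nil =>
      simp only [dlsum, evalMDL]
      rcases hdef with rfl | rfl <;> norm_num
  | cons p rest ih =>
      obtain ⟨l, b⟩ := p
      have hbrest : ∀ q ∈ rest, q.2 = 1 ∨ q.2 = -1 :=
        fun q hq => hb q (List.mem_cons_of_mem _ hq)
      have ih' := ih hbrest
      have hbb : b = 1 ∨ b = -1 := hb (l, b) (List.mem_cons_self)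
      set c := (wts (b :: rest.map Prod.snd) bdef).headD 0 with hc
      have hdl : dlsum ((l, b) :: rest) bdef x
          = (if x l = 1 then b * c else 0) + dlsum rest bdef x := by
        simp only [dlsum, hc]
      have hev : evalMDL ((l, b) :: rest) bdef x
          = if x l = 1 then b else evalMDL rest bdef x := by
        simp only [evalMDL]
      rw [hdl, hev]
      by_cases hxl : x l = 1
      · rw [if_pos hxl, if_pos hxl]
        have hb2 : b * b = 1 := by rcases hbb with rfl | rfl <;> norm_num
        have hexp : (b * c + dlsum rest bdef x) * b = c + b * dlsum rest bdef x := by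
          have : (b * c + dlsum rest bdef x) * b = (b * b) * c + b * dlsum rest bdef x := by
            ring
          rw [this, hb2, one_mul]
        rw [hexp]
        have hM2 := M2 rest bdef b hbrest hdef hbb x
        by_cases hbh : b = (rest.map Prod.snd).headD bdef
        · -- same block : c = head weight of rest
          have hceq : c = (wts (rest.map Prod.snd) bdef).headD 0 := by
            rw [hc]
            simp only [wts]
            rw [if_pos hbh, List.headD_cons]
          have hM2' : 1 - opp (rest.map Prod.snd) bdef ((rest.map Prod.snd).headD bdef)
              ≤ (rest.map Prod.snd).headD bdef * dlsum rest bdef x := by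
            rw [← hbh]; exact hM2
          rw [hceq, hbh]
          rcases K1 (rest.map Prod.snd) bdef with ⟨hz, ho⟩ | hk
          · rw [ho] at hM2'
            rw [hz]
            linarith
          · linarith
        · -- new block : c = 3 + sum of rest weights
          have hceq : c = 3 + (wts (rest.map Prod.snd) bdef).sum := by
            rw [hc]
            simp only [wts]
            rw [if_neg hbh, List.headD_cons]
          have hop := opp_le (rest.map Prod.snd) bdef b
          rw [hceq]
          linarith
      · rw [if_neg hxl, if_neg hxl, zero_add]
        exact ih'

noncomputable def uvec {d : ℕ} : List (Fin d × ℝ) → ℝ → Fin (d + 1) → ℝ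
  | [], bdef, j => if j = Fin.last d then bdef else 0
  | (l, b) :: rest, bdef, j =>
      (if j = Fin.castSucc l then b * (wts (b :: rest.map Prod.snd) bdef).headD 0 / 2 else 0)
      + (if j = Fin.last d then b * (wts (b :: rest.map Prod.snd) bdef).headD 0 / 2 else 0)
      + uvec rest bdef j

lemma sum_ite_mul {d : ℕ} (a : Fin (d + 1)) (w : ℝ) (y : Fin (d + 1) → ℝ) :
    ∑ j, (if j = a then w else 0) * y j = w * y a := by
  rw [Finset.sum_eq_single a]
  · rw [if_pos rfl]
  · intro j _ hj; rw [if_neg hj, zero_mul]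
  · intro h; exact absurd (Finset.mem_univ a) h

lemma uvec_dot {d : ℕ} (L : List (Fin d × ℝ)) (bdef : ℝ) (x : Fin d → ℝ)
    (hx : ∀ i, x i = 1 ∨ x i = -1) :
    ∑ j, uvec L bdef j * (Fin.snoc x 1 : Fin (d + 1) → ℝ) j = dlsum L bdef x := by
  induction L with
  | nil =>
      simp only [uvec, dlsum]
      rw [sum_ite_mul (Fin.last d) bdef, Fin.snoc_last, mul_one]
  | cons p rest ih =>
      obtain ⟨l, b⟩ := p
      set c := (wts (b :: rest.map Prod.snd) bdef).headD 0 with hc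
      have expand : ∀ j, uvec ((l, b) :: rest) bdef j * (Fin.snoc x 1 : Fin (d+1) → ℝ) j
          = (if j = Fin.castSucc l then b * c / 2 else 0) * (Fin.snoc x 1 : Fin (d+1) → ℝ) j
            + (if j = Fin.last d then b * c / 2 else 0) * (Fin.snoc x 1 : Fin (d+1) → ℝ) j
            + uvec rest bdef j * (Fin.snoc x 1 : Fin (d+1) → ℝ) j := by
        intro j; simp only [uvec, hc]; ring
      rw [Finset.sum_congr rfl (fun j _ => expand j)]
      rw [Finset.sum_add_distrib, Finset.sum_add_distrib, ih,
        sum_ite_mul, sum_ite_mul, Fin.snoc_castSucc, Fin.snoc_last, mul_one]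
      have : dlsum ((l, b) :: rest) bdef x
          = (if x l = 1 then b * c else 0) + dlsum rest bdef x := by
        simp only [dlsum, hc]
      rw [this]
      rcases hx l with hxl | hxl
      · rw [hxl, if_pos rfl]; ring
      · rw [hxl, if_neg (by norm_num)]; ring

lemma sum_abs_ite {d : ℕ} (a : Fin (d + 1)) (w : ℝ) :
    ∑ j, |if j = a then w else 0| = |w| := by
  rw [Finset.sum_eq_single a]
  · rw [if_pos rfl]
  · intro j _ hj; rw [if_neg hj, abs_zero]
  · intro h; exact absurd (Finset.mem_univ a) h

lemma uvec_abs {d : ℕ} (L : List (Fin d × ℝ)) (bdef : ℝ)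
    (hb : ∀ p ∈ L, p.2 = 1 ∨ p.2 = -1) (hdef : bdef = 1 ∨ bdef = -1) :
    ∑ j, |uvec L bdef j| ≤ (wts (L.map Prod.snd) bdef).sum + 1 := by
  induction L with
  | nil =>
      simp only [uvec, List.map_nil, wts, List.sum_nil, zero_add]
      rw [sum_abs_ite]
      rcases hdef with rfl | rfl <;> norm_num
  | cons p rest ih =>
      obtain ⟨l, b⟩ := p
      have hbb : b = 1 ∨ b = -1 := hb (l, b) (List.mem_cons_self)
      have ih' := ih (fun q hq => hb q (List.mem_cons_of_mem _ hq))
      set c := (wts (b :: rest.map Prod.snd) bdef).headD 0 with hc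
      have hcn : 0 ≤ c := wts_head_nonneg _ _
      have habs : |b * c / 2| = c / 2 := by
        rcases hbb with rfl | rfl
        · rw [one_mul, abs_of_nonneg (by linarith)]
        · rw [neg_one_mul, abs_div, abs_neg, abs_of_nonneg hcn]
          norm_num
      have step : ∀ j, |uvec ((l, b) :: rest) bdef j|
          ≤ |if j = Fin.castSucc l then b * c / 2 else 0|
            + |if j = Fin.last d then b * c / 2 else 0| + |uvec rest bdef j| := by
        intro j
        simp only [uvec, hc]
        exact (abs_add_three _ _ _)
      calc ∑ j, |uvec ((l, b) :: rest) bdef j|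
          ≤ ∑ j, (|if j = Fin.castSucc l then b * c / 2 else 0|
            + |if j = Fin.last d then b * c / 2 else 0| + |uvec rest bdef j|) :=
            Finset.sum_le_sum (fun j _ => step j)
        _ = c / 2 + c / 2 + ∑ j, |uvec rest bdef j| := by
            rw [Finset.sum_add_distrib, Finset.sum_add_distrib, sum_abs_ite, sum_abs_ite, habs]
        _ ≤ c / 2 + c / 2 + ((wts (rest.map Prod.snd) bdef).sum + 1) := by linarith
        _ = (wts (((l, b) :: rest).map Prod.snd) bdef).sum + 1 := by
            have : wts (((l, b) :: rest).map Prod.snd) bdef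
                = c :: wts (rest.map Prod.snd) bdef := by
              simp only [List.map_cons, wts, hc, List.headD_cons]
            rw [this, List.sum_cons]
            ring

/-- Every monotone 1-decision list over `d` variables of length `r` whose output bits
alternate at most `D` times is computed by a halfspace over `d+1` variables (the input
extended by a constant coordinate `1`) with margin `κ / r^D`, for a universal constant
`κ > 0`.  The decision list is given by its `r - 1` rules `L` and its final bit `bdef`. -/
theorem stmt_12 :
    ∃ κ : ℝ, 0 < κ ∧
      ∀ (d r D : ℕ), 0 < d → 0 < r → 0 < D →
        ∀ (L : List (Fin d × ℝ)) (bdef : ℝ),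
          L.length = r - 1 →
          (∀ p ∈ L, p.2 = 1 ∨ p.2 = -1) →
          (bdef = 1 ∨ bdef = -1) →
          altCount (L.map Prod.snd ++ [bdef]) ≤ D →
          ∃ v : Fin (d + 1) → ℝ, (∑ i, |v i| = 1) ∧
            ∀ x : Fin d → ℝ, (∀ i, x i = 1 ∨ x i = -1) →
              Real.sign (∑ i, v i * (Fin.snoc x 1 : Fin (d + 1) → ℝ) i) = evalMDL L bdef x ∧
              κ / (r : ℝ) ^ D ≤ |∑ i, v i * (Fin.snoc x 1 : Fin (d + 1) → ℝ) i| := by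
  refine ⟨1/3, by norm_num, ?_⟩
  intro d r D hd hr hD L bdef hlen hb hdef halt
  -- absolute value of the unnormalized sum is at least 1
  have habs1 : ∀ x : Fin d → ℝ, (∀ i, x i = 1 ∨ x i = -1) → 1 ≤ |dlsum L bdef x| := by
    intro x hx
    have hM := M1 L bdef hb hdef x
    rcases evalMDL_pm L bdef hb hdef x with he | he
    · rw [he, mul_one] at hM
      calc (1:ℝ) ≤ dlsum L bdef x := hM
        _ ≤ |dlsum L bdef x| := le_abs_self _
    · rw [he] at hM
      have : dlsum L bdef x ≤ -1 := by linarith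
      calc (1:ℝ) ≤ -dlsum L bdef x := by linarith
        _ ≤ |dlsum L bdef x| := neg_le_abs _
  set N := ∑ j, |uvec L bdef j| with hN
  -- N is at least 1
  have hN1 : (1:ℝ) ≤ N := by
    have hx1 : ∀ i : Fin d, (fun _ : Fin d => (1:ℝ)) i = 1 ∨ (fun _ : Fin d => (1:ℝ)) i = -1 :=
      fun i => Or.inl rfl
    have hdot := uvec_dot L bdef (fun _ => 1) hx1
    have hy : ∀ j : Fin (d+1), |(Fin.snoc (fun _ : Fin d => (1:ℝ)) 1 : Fin (d+1) → ℝ) j| ≤ 1 := by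
      intro j
      induction j using Fin.lastCases with
      | last => rw [Fin.snoc_last]; norm_num
      | cast i => rw [Fin.snoc_castSucc]; norm_num
    calc (1:ℝ) ≤ |dlsum L bdef (fun _ => 1)| := habs1 _ hx1
      _ = |∑ j, uvec L bdef j * (Fin.snoc (fun _ : Fin d => (1:ℝ)) 1 : Fin (d+1) → ℝ) j| := by
          rw [hdot]
      _ ≤ ∑ j, |uvec L bdef j * (Fin.snoc (fun _ : Fin d => (1:ℝ)) 1 : Fin (d+1) → ℝ) j| :=
          Finset.abs_sum_le_sum_abs _ _
      _ ≤ ∑ j, |uvec L bdef j| := by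
          apply Finset.sum_le_sum
          intro j _
          rw [abs_mul]
          calc |uvec L bdef j| * |(Fin.snoc (fun _ : Fin d => (1:ℝ)) 1 : Fin (d+1) → ℝ) j|
              ≤ |uvec L bdef j| * 1 := by
                apply mul_le_mul_of_nonneg_left (hy j) (abs_nonneg _)
            _ = |uvec L bdef j| := mul_one _
  have hNpos : (0:ℝ) < N := lt_of_lt_of_le one_pos hN1
  -- N is at most 3 * r ^ D
  have hrR : (1:ℝ) ≤ (r:ℝ) := by exact_mod_cast hr
  have hNle : N ≤ 3 * (r:ℝ) ^ D := by
    have hPQ := (wts_PQ (L.map Prod.snd) bdef).1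
    have hlen2 : ((L.map Prod.snd).length : ℝ) + 1 = (r:ℝ) := by
      rw [List.length_map, hlen]
      have : r - 1 + 1 = r := Nat.succ_pred_eq_of_pos hr
      exact_mod_cast congrArg (Nat.cast : ℕ → ℝ) this
    rw [hlen2] at hPQ
    have hmono : (r:ℝ) ^ (altCount (L.map Prod.snd ++ [bdef])) ≤ (r:ℝ) ^ D :=
      pow_le_pow_right₀ hrR halt
    have hu := uvec_abs L bdef hb hdef
    calc N ≤ (wts (L.map Prod.snd) bdef).sum + 1 := hu
      _ ≤ 3 * (r:ℝ) ^ (altCount (L.map Prod.snd ++ [bdef])) - 2 := by linarith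
      _ ≤ 3 * (r:ℝ) ^ D := by linarith
  refine ⟨fun j => uvec L bdef j / N, ?_, ?_⟩
  · have : ∀ j : Fin (d+1), |uvec L bdef j / N| = |uvec L bdef j| / N := by
      intro j; rw [abs_div, abs_of_pos hNpos]
    rw [Finset.sum_congr rfl (fun j _ => this j), ← Finset.sum_div, ← hN,
      div_self (ne_of_gt hNpos)]
  · intro x hx
    have hdot : ∑ j, (uvec L bdef j / N) * (Fin.snoc x 1 : Fin (d+1) → ℝ) j
        = dlsum L bdef x / N := by
      rw [← uvec_dot L bdef x hx, Finset.sum_div]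
      exact Finset.sum_congr rfl (fun j _ => by ring)
    rw [hdot]
    constructor
    · rcases evalMDL_pm L bdef hb hdef x with he | he
      · rw [he]
        have hM := M1 L bdef hb hdef x
        rw [he, mul_one] at hM
        exact Real.sign_of_pos (div_pos (by linarith) hNpos)
      · rw [he]
        have hM := M1 L bdef hb hdef x
        rw [he] at hM
        have : dlsum L bdef x < 0 := by nlinarith
        exact Real.sign_of_neg (div_neg_of_neg_of_pos this hNpos)
    · have h1 : (1:ℝ) ≤ |dlsum L bdef x| := habs1 x hx
      have hrpow : (0:ℝ) < (r:ℝ) ^ D := by positivity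
      rw [abs_div, abs_of_pos hNpos]
      calc (1:ℝ)/3 / (r:ℝ) ^ D = 1 / (3 * (r:ℝ) ^ D) := by
            rw [div_div]
        _ ≤ 1 / N := one_div_le_one_div_of_le hNpos hNle
        _ ≤ |dlsum L bdef x| / N := (div_le_div_iff_of_pos_right hNpos).mpr h1
end

section
/- Let F be a finite set of Boolean functions on {0,1}^d containing the constant-true function T, let M = |F|, and let C be the class of F-decision lists. For all ε, δ, α, β ∈ (0,1) and every integer n with n ≥ max( (64/α)(VC(C) log(64/α) + log(16/β)), 8M log(2M/√β)(2 log(1/δ) + 3/2)/(αε) ), there exists a randomized algorithm L : ({0,1}^d × {0,1})^n → (distributions over F-decision lists) such that: (i) L is (ε,δ)-differentially private, i.e., for all input samples S, S' differing in a single labeled example and all sets R of decision lists, Pr[L(S) ∈ R] ≤ e^ε Pr[L(S') ∈ R] + δ; and (ii) L is an (α,β)-PAC learner for C, i.e., for every distribution D on {0,1}^d and every c ∈ C, with probability at least 1 − β over a sample S = ((x_1, c(x_1)), …, (x_n, c(x_n))) with x_i i.i.d. from D and over the randomness of L, the output hypothesis h satisfies Pr_{x∼D}[h(x) ≠ c(x)]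 ≤ α. -/
/-- `L` is an `F`-decision list: all its features belong to `F`. -/
def IsFDL {d : ℕ} (F : Finset (Feature d)) (L : DecList d) : Prop :=
  ∀ p ∈ L.1, p.1 ∈ F

/-- The concept class of Boolean functions computed by `F`-decision lists. -/
def FDLClass (d : ℕ) (F : Finset (Feature d)) : Set ((Fin d → Bool) → Bool) :=
  {g | ∃ L : DecList d, IsFDL F L ∧ ∀ x, evalDL L x = g x}

/-- A set `A` is shattered by a class `C` of Boolean functions. -/
def Shatters {X : Type*} (C : Set (X → Bool)) (A : Finset X) : Prop :=
  ∀ b : X → Bool, ∃ c ∈ C, ∀ a ∈ A, c a = b a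

/-- The Vapnik–Chervonenkis dimension of a class of Boolean functions on a finite domain. -/
noncomputable def vcDim {X : Type*} [Fintype X] (C : Set (X → Bool)) : ℕ :=
  sSup {k | ∃ A : Finset X, A.card = k ∧ Shatters C A}

/-- The probability mass (under the distribution `D` on inputs) of the disagreement region
between hypothesis `h` and target `c`. -/
noncomputable def errP {d : ℕ} (D : PMF (Fin d → Bool)) (h c : DecList d) : ENNReal :=
  ∑ x : Fin d → Bool, if evalDL h x ≠ evalDL c x then D x else 0

namespace Aux13
variable {d : ℕ}


lemma evalRules_append (l l' : List (Feature d × Bool)) (bdef : Bool) (x : Fin d → Bool) :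
    evalRules (l ++ l') bdef x = evalRules l (evalRules l' bdef x) x := by
  induction l with
  | nil => simp [evalRules]
  | cons p rest ih => obtain ⟨g, b⟩ := p; simp [evalRules, ih]

lemma evalRules_replicate (m : ℕ) (b : Bool) (x : Fin d → Bool) :
    evalRules (List.replicate m ((fun _ => true : Feature d), b)) b x = b := by
  induction m with
  | zero => simp [evalRules]
  | succ k ih => simp [List.replicate, evalRules, ih]

lemma evalRules_filter (P : Feature d × Bool → Bool) (l : List (Feature d × Bool))
    (bdef : Bool) (x : Fin d → Bool) (h : ∀ q ∈ l, P q = false → q.1 x = false) :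
    evalRules (l.filter P) bdef x = evalRules l bdef x := by
  induction l with
  | nil => simp
  | cons q rest ih =>
    obtain ⟨g, b⟩ := q
    by_cases hP : P (g, b) = true
    · rw [List.filter_cons_of_pos hP]
      simp only [evalRules]
      split
      · rfl
      · exact ih (fun q hq hPq => h q (List.mem_cons_of_mem _ hq) hPq)
    · have hP' : P (g, b) = false := by simpa using hP
      rw [List.filter_cons_of_neg (by simp [hP'])]
      have hg : g x = false := h (g, b) List.mem_cons_self hP'
      simp only [evalRules, hg]
      simpa using ih (fun q hq hPq => h q (List.mem_cons_of_mem _ hq) hPq)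

/-- Canonicalize: keep only the first occurrence of each feature. -/
def canonList : List (Feature d × Bool) → List (Feature d × Bool)
  | [] => []
  | p :: rest => p :: (canonList rest).filter (fun q => decide (q.1 ≠ p.1))

lemma canonList_eval (l : List (Feature d × Bool)) (bdef : Bool) (x : Fin d → Bool) :
    evalRules (canonList l) bdef x = evalRules l bdef x := by
  induction l with
  | nil => rfl
  | cons p rest ih =>
    obtain ⟨g, b⟩ := p
    simp only [canonList, evalRules]
    split
    · rfl
    · rename_i hg
      rw [evalRules_filter _ _ _ _ ?_, ih]
      intro q hq hPq
      have : q.1 = g := by simpa using hPq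
      rw [this]
      simpa using hg

lemma canonList_subset (l : List (Feature d × Bool)) : ∀ q ∈ canonList l, q ∈ l := by
  induction l with
  | nil => simp [canonList]
  | cons p rest ih =>
    intro q hq
    simp only [canonList, List.mem_cons] at hq
    rcases hq with rfl | hq
    · exact List.mem_cons_self
    · exact List.mem_cons_of_mem _ (ih q (List.mem_of_mem_filter hq))

lemma canonList_nodup (l : List (Feature d × Bool)) :
    ((canonList l).map Prod.fst).Nodup := by
  induction l with
  | nil => simp [canonList]
  | cons p rest ih =>
    simp only [canonList, List.map_cons, List.nodup_cons]
    constructor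
    · intro hmem
      obtain ⟨q, hq, hq1⟩ := List.mem_map.mp hmem
      have := List.of_mem_filter hq
      simp [hq1] at this
    · exact ih.sublist (List.Sublist.map _ List.filter_sublist)

lemma canonList_length_le {F : Finset (Feature d)} (l : List (Feature d × Bool))
    (hl : ∀ q ∈ l, q.1 ∈ F) : (canonList l).length ≤ F.card := by
  classical
  have hnd := canonList_nodup l
  have hsub : ((canonList l).map Prod.fst).toFinset ⊆ F := by
    intro g hg
    simp only [List.mem_toFinset, List.mem_map] at hg
    obtain ⟨q, hq, rfl⟩ := hg
    exact hl q (canonList_subset l q hq)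
  calc (canonList l).length = ((canonList l).map Prod.fst).length := by simp
    _ = ((canonList l).map Prod.fst).toFinset.card := (List.toFinset_card_of_nodup hnd).symm
    _ ≤ F.card := Finset.card_le_card hsub

/-- Every F-decision list is computed by one whose rule list has length exactly `F.card`. -/
lemma exists_rep (F : Finset (Feature d)) (hTF : (fun _ => true) ∈ F)
    (c : DecList d) (hc : IsFDL F c) :
    ∃ l : List (Feature d × Bool), l.length = F.card ∧ (∀ p ∈ l, p.1 ∈ F) ∧
      ∀ x, evalRules l c.2 x = evalDL c x := by
  classical
  set l0 := canonList c.1 with hl0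
  have hk : l0.length ≤ F.card := canonList_length_le c.1 (fun q hq => hc q hq)
  refine ⟨l0 ++ List.replicate (F.card - l0.length) ((fun _ => true : Feature d), c.2),
    ?_, ?_, ?_⟩
  · simp [Nat.add_sub_cancel' hk]
  · intro p hp
    rcases List.mem_append.mp hp with hp | hp
    · exact hc p (canonList_subset _ p hp)
    · have := List.eq_of_mem_replicate hp
      rw [this]; exact hTF
  · intro x
    rw [evalRules_append, evalRules_replicate, canonList_eval]
    rfl

/-- Encode a length-`F.card` decision list as a function. -/
def toDL (F : Finset (Feature d)) (w : (Fin F.card → (↥F × Bool)) × Bool) : DecList d :=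
  (List.ofFn (fun i => (((w.1 i).1 : Feature d), (w.1 i).2)), w.2)

noncomputable def hypSet (d : ℕ) (F : Finset (Feature d)) : Finset (DecList d) := by
  classical exact Finset.image (toDL F) Finset.univ

lemma isFDL_of_mem_hypSet {F : Finset (Feature d)} {h : DecList d}
    (hh : h ∈ hypSet d F) : IsFDL F h := by
  classical
  simp only [hypSet, Finset.mem_image] at hh
  obtain ⟨w, -, rfl⟩ := hh
  intro p hp
  simp only [toDL, List.mem_ofFn] at hp
  obtain ⟨i, rfl⟩ := hp
  exact ((w.1 i).1).2

lemma card_hypSet_le (F : Finset (Feature d)) :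
    (hypSet d F).card ≤ (2 * F.card) ^ F.card * 2 := by
  classical
  calc (hypSet d F).card ≤ Fintype.card ((Fin F.card → (↥F × Bool)) × Bool) := by
        rw [hypSet]; exact Finset.card_image_le.trans (le_of_eq Finset.card_univ)
    _ = (2 * F.card) ^ F.card * 2 := by
        simp [Fintype.card_prod, Fintype.card_fun, Fintype.card_coe, mul_comm]

lemma exists_mem_hypSet (F : Finset (Feature d)) (hTF : (fun _ => true) ∈ F)
    (c : DecList d) (hc : IsFDL F c) :
    ∃ h ∈ hypSet d F, ∀ x, evalDL h x = evalDL c x := by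
  classical
  obtain ⟨l, hlen, hmem, heval⟩ := exists_rep F hTF c hc
  refine ⟨toDL F ⟨fun i => (⟨(l.get (Fin.cast hlen.symm i)).1,
      hmem _ (l.get_mem _)⟩, (l.get (Fin.cast hlen.symm i)).2), c.2⟩,
    Finset.mem_image_of_mem _ (Finset.mem_univ _), ?_⟩
  intro x
  have hlist : List.ofFn (fun i : Fin F.card => ((l.get (Fin.cast hlen.symm i)).1,
      (l.get (Fin.cast hlen.symm i)).2)) = l := by
    apply List.ext_getElem
    · simp [hlen]
    · intro i h1 h2
      simp [List.getElem_ofFn]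
  simp only [toDL, evalDL]
  rw [hlist]
  exact heval x

lemma hypSet_nonempty (F : Finset (Feature d)) (hTF : (fun _ => true) ∈ F) :
    (hypSet d F).Nonempty := by
  classical
  exact ⟨_, Finset.mem_image_of_mem _ (Finset.mem_univ
    ⟨fun _ => (⟨_, hTF⟩, true), true⟩)⟩

open scoped Classical

/-- Number of sample points misclassified by `h`. -/
noncomputable def miss (h : DecList d) (S : Fin n → (Fin d → Bool) × Bool) : ℕ :=
  (Finset.univ.filter (fun i => evalDL h (S i).1 ≠ (S i).2)).card

/-- Exponential-mechanism weight. -/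
noncomputable def wgt (ε : ℝ) (h : DecList d) (S : Fin n → (Fin d → Bool) × Bool) : ENNReal :=
  ENNReal.ofReal (Real.exp (-(ε / 2) * miss h S))

lemma wgt_pos {ε : ℝ} {h : DecList d} {S : Fin n → (Fin d → Bool) × Bool} :
    0 < wgt ε h S := by
  simp [wgt, ENNReal.ofReal_pos, Real.exp_pos]

lemma wgt_ne_top {ε : ℝ} {h : DecList d} {S : Fin n → (Fin d → Bool) × Bool} :
    wgt ε h S ≠ ⊤ := ENNReal.ofReal_ne_top

lemma wgt_le_one {ε : ℝ} (hε : 0 ≤ ε) {h : DecList d} {S : Fin n → (Fin d → Bool) × Bool} :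
    wgt ε h S ≤ 1 := by
  rw [wgt, ← ENNReal.ofReal_one]
  apply ENNReal.ofReal_le_ofReal
  rw [← Real.exp_zero]
  apply Real.exp_le_exp.2
  have : (0:ℝ) ≤ (miss h S : ℝ) := Nat.cast_nonneg _
  nlinarith

lemma miss_neighbor {h : DecList d} {S S' : Fin n → (Fin d → Bool) × Bool} {i : Fin n}
    (hSS : ∀ k : Fin n, k ≠ i → S k = S' k) : miss h S ≤ miss h S' + 1 := by
  have hsub : (Finset.univ.filter (fun k => evalDL h (S k).1 ≠ (S k).2)) ⊆
      insert i (Finset.univ.filter (fun k => evalDL h (S' k).1 ≠ (S' k).2)) := by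
    intro k hk
    rcases eq_or_ne k i with rfl | hki
    · exact Finset.mem_insert_self _ _
    · refine Finset.mem_insert_of_mem ?_
      simp only [Finset.mem_filter, Finset.mem_univ, true_and] at hk ⊢
      rwa [← hSS k hki]
  refine le_trans (Finset.card_le_card hsub) ?_
  refine le_trans (Finset.card_insert_le _ _) ?_
  rw [miss]

lemma wgt_neighbor {ε : ℝ} (hε : 0 ≤ ε) {h : DecList d}
    {S S' : Fin n → (Fin d → Bool) × Bool} {i : Fin n}
    (hSS : ∀ k : Fin n, k ≠ i → S k = S' k) :
    wgt ε h S ≤ ENNReal.ofReal (Real.exp (ε / 2)) * wgt ε h S' := by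
  rw [wgt, wgt, ← ENNReal.ofReal_mul (Real.exp_nonneg _), ← Real.exp_add]
  apply ENNReal.ofReal_le_ofReal
  apply Real.exp_le_exp.2
  have hm : (miss h S' : ℝ) ≤ (miss h S : ℝ) + 1 := by
    exact_mod_cast miss_neighbor (fun k hk => (hSS k hk).symm)
  nlinarith [mul_nonneg (by linarith : (0:ℝ) ≤ ε/2)
    (by linarith : (0:ℝ) ≤ (miss h S : ℝ) + 1 - (miss h S' : ℝ))]

/-- Weight of a correctly-labeled sample under a hypothesis, as a product. -/
lemma wgt_eq_prod (ε : ℝ) (h c : DecList d) (xs : Fin n → (Fin d → Bool)) :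
    wgt ε h (fun i => (xs i, evalDL c (xs i))) =
      ∏ i : Fin n, (if evalDL h (xs i) ≠ evalDL c (xs i)
        then ENNReal.ofReal (Real.exp (-(ε / 2))) else 1) := by
  have hcard : (miss h (fun i => (xs i, evalDL c (xs i))) : ℝ) =
      ∑ i : Fin n, (if evalDL h (xs i) ≠ evalDL c (xs i) then (1:ℝ) else 0) := by
    rw [miss, Finset.card_filter]
    push_cast
    rfl
  rw [wgt, hcard, Finset.mul_sum, Real.exp_sum]
  rw [ENNReal.ofReal_prod_of_nonneg (fun i _ => Real.exp_nonneg _)]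
  apply Finset.prod_congr rfl
  intro i _
  split
  · simp
  · simp

lemma wgt_miss_zero {ε : ℝ} {h c : DecList d} {xs : Fin n → (Fin d → Bool)}
    (hhc : ∀ x, evalDL h x = evalDL c x) :
    wgt ε h (fun i => (xs i, evalDL c (xs i))) = 1 := by
  have : miss h (fun i => (xs i, evalDL c (xs i))) = 0 := by
    rw [miss, Finset.card_eq_zero]
    apply Finset.filter_eq_empty_iff.2
    intro i _
    simp [hhc]
  simp [wgt, this]

lemma one_sub_exp_ge (ε : ℝ) (hε0 : 0 < ε) (hε1 : ε ≤ 1) :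
    ε / 4 ≤ 1 - Real.exp (-(ε / 2)) := by
  set t := Real.exp (-(ε / 2)) with ht
  have h1 : t * (1 + ε / 2) ≤ 1 := by
    have h2 : 1 + ε / 2 ≤ Real.exp (ε / 2) := by
      have := Real.add_one_le_exp (ε / 2); linarith
    calc t * (1 + ε / 2) ≤ t * Real.exp (ε / 2) :=
          mul_le_mul_of_nonneg_left h2 (Real.exp_nonneg _)
      _ = 1 := by rw [ht, ← Real.exp_add]; simp
  have htpos : 0 < t := Real.exp_pos _
  rcases le_total t (1/2) with h | h
  · linarith
  · have h2 : (1/2) * (ε/2) ≤ t * (ε/2) :=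
      mul_le_mul_of_nonneg_right h (by linarith)
    linarith

/-- The central numeric estimate: the sample-size bound kills the union bound. -/
lemma numeric (M : ℕ) (hM : 1 ≤ M) (ε δ α β nR : ℝ)
    (hε : ε ∈ Set.Ioo (0:ℝ) 1) (hδ : δ ∈ Set.Ioo (0:ℝ) 1)
    (hα : α ∈ Set.Ioo (0:ℝ) 1) (hβ : β ∈ Set.Ioo (0:ℝ) 1)
    (hn : 8 * (M : ℝ) * Real.log (2 * (M : ℝ) / Real.sqrt β) *
          (2 * Real.log (1 / δ) + 3 / 2) / (α * ε) ≤ nR) :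
    ((2 * (M : ℝ)) ^ M * 2) * Real.exp (-(nR * (α * (1 - Real.exp (-(ε / 2)))))) ≤ β := by
  have hM1 : (1 : ℝ) ≤ (M : ℝ) := by exact_mod_cast hM
  have hMpos : (0:ℝ) < 2 * M := by linarith
  set B := Real.log (1 / β) with hB
  have hBnn : 0 ≤ B := Real.log_nonneg (by rw [le_div_iff₀ hβ.1]; linarith [hβ.2.le])
  set L := Real.log (2 * (M:ℝ) / Real.sqrt β) with hL
  have hLeq : L = Real.log (2 * M) + B / 2 := by
    rw [hL, Real.log_div (ne_of_gt hMpos) (ne_of_gt (Real.sqrt_pos.2 hβ.1)), Real.log_sqrt hβ.1.le, hB,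
      Real.log_div one_ne_zero (ne_of_gt hβ.1), Real.log_one]
    ring
  have hlog2M : Real.log 2 ≤ Real.log (2 * M) :=
    Real.log_le_log (by norm_num) (by linarith)
  have hlog2 : (0:ℝ) < Real.log 2 := Real.log_pos (by norm_num)
  set K := 2 * Real.log (1 / δ) + 3 / 2 with hK
  have hKge : 3 / 2 ≤ K := by
    have : 0 ≤ Real.log (1 / δ) :=
      Real.log_nonneg (by rw [le_div_iff₀ hδ.1]; linarith [hδ.2.le])
    rw [hK]; linarith
  clear_value B L K
  have hLnn : 0 ≤ L := by rw [hLeq]; linarith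
  -- n * u ≥ 2 M L K ≥ 3 M L
  have hu4 : α * ε / 4 ≤ α * (1 - Real.exp (-(ε / 2))) := by
    have h1 := mul_le_mul_of_nonneg_left (one_sub_exp_ge ε hε.1 hε.2.le) hα.1.le
    calc α * ε / 4 = α * (ε / 4) := by ring
      _ ≤ α * (1 - Real.exp (-(ε / 2))) := h1
  have hnum : (0:ℝ) ≤ 8 * (M:ℝ) * L * K :=
    mul_nonneg (mul_nonneg (mul_nonneg (by norm_num) (by linarith)) hLnn)
      (le_trans (by norm_num) hKge)
  have hnnn : (0:ℝ) ≤ nR := le_trans (div_nonneg hnum (le_of_lt (mul_pos hα.1 hε.1))) hn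
  have hnae : 8 * (M:ℝ) * L * K ≤ nR * (α * ε) := by
    rw [div_le_iff₀ (mul_pos hα.1 hε.1)] at hn
    linarith
  have hnu : 3 * M * L ≤ nR * (α * (1 - Real.exp (-(ε / 2)))) := by
    have h1 : nR * (α * ε / 4) ≤ nR * (α * (1 - Real.exp (-(ε / 2)))) :=
      mul_le_mul_of_nonneg_left hu4 hnnn
    have h2 : 2 * (M:ℝ) * L * K = (8 * M * L * K) / 4 := by ring
    have hML : (0:ℝ) ≤ M * L := mul_nonneg (by linarith) hLnn
    have h3' : (0:ℝ) ≤ (M * L) * (2 * K - 3) := mul_nonneg hML (by linarith [hKge])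
    have h4 : nR * (α * ε / 4) = nR * (α * ε) / 4 := by ring
    nlinarith [h1, h2, h3', h4, hnae]
  -- 3 M L ≥ log ((2M)^M * 2) + B
  set C := (2 * (M:ℝ)) ^ M * 2 with hC
  have hCpos : (0:ℝ) < C := by positivity
  have hlogC : Real.log C = M * Real.log (2 * M) + Real.log 2 := by
    rw [hC, Real.log_mul (by positivity) (by norm_num), Real.log_pow]
  have hCB : Real.log C + B ≤ 3 * M * L := by
    rw [hlogC, hLeq]
    have h5 : Real.log 2 * 1 ≤ Real.log (2 * M) * M :=
      mul_le_mul hlog2M hM1 zero_le_one (by linarith)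
    have h6 : B * 1 ≤ B * M := mul_le_mul_of_nonneg_left hM1 hBnn
    ring_nf
    ring_nf at h5 h6
    linarith
  -- conclude
  have hexp : Real.exp (-(nR * (α * (1 - Real.exp (-(ε / 2)))))) ≤ C⁻¹ * β := by
    have : Real.exp (-(nR * (α * (1 - Real.exp (-(ε / 2)))))) ≤
        Real.exp (-(Real.log C + B)) := by
      apply Real.exp_le_exp.2; linarith
    refine this.trans (le_of_eq ?_)
    rw [neg_add, Real.exp_add, Real.exp_neg, Real.exp_log hCpos, hB,
      Real.log_div one_ne_zero (ne_of_gt hβ.1), Real.log_one, neg_sub, sub_zero,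
      Real.exp_log hβ.1]
  calc C * Real.exp (-(nR * (α * (1 - Real.exp (-(ε / 2)))))) ≤ C * (C⁻¹ * β) :=
        mul_le_mul_of_nonneg_left hexp hCpos.le
    _ = β := by field_simp

noncomputable def Z (H : Finset (DecList d)) (ε : ℝ) (S : Fin n → (Fin d → Bool) × Bool) :
    ENNReal := ∑ h ∈ H, wgt ε h S

lemma Z_ne_top {H : Finset (DecList d)} {ε : ℝ} {S : Fin n → (Fin d → Bool) × Bool} :
    Z H ε S ≠ ⊤ := by
  rw [Z]
  exact (ENNReal.sum_lt_top.2 (fun h _ => lt_of_le_of_ne le_top wgt_ne_top)).ne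

lemma Z_pos {H : Finset (DecList d)} (hne : H.Nonempty) {ε : ℝ}
    {S : Fin n → (Fin d → Bool) × Bool} : 0 < Z H ε S := by
  obtain ⟨h, hh⟩ := hne
  rw [Z]
  exact lt_of_lt_of_le (wgt_pos (ε := ε) (h := h) (S := S))
    (Finset.single_le_sum (f := fun g => wgt ε g S) (fun _ _ => zero_le) hh)

noncomputable def pdf (H : Finset (DecList d)) (ε : ℝ)
    (S : Fin n → (Fin d → Bool) × Bool) : DecList d → ENNReal :=
  fun h => if h ∈ H then wgt ε h S / Z H ε S else 0

lemma sum_pdf {H : Finset (DecList d)} (hne : H.Nonempty) (ε : ℝ)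
    (S : Fin n → (Fin d → Bool) × Bool) : ∑ h ∈ H, pdf H ε S h = 1 := by
  have : ∑ h ∈ H, pdf H ε S h = (∑ h ∈ H, wgt ε h S) * (Z H ε S)⁻¹ := by
    rw [Finset.sum_mul]
    exact Finset.sum_congr rfl (fun h hh => by rw [pdf, if_pos hh, ENNReal.div_eq_inv_mul,
      mul_comm])
  rw [this, ← Z]
  exact ENNReal.mul_inv_cancel (Z_pos hne).ne' Z_ne_top

lemma pdf_neighbor {H : Finset (DecList d)} (hne : H.Nonempty) {ε : ℝ} (hε : 0 ≤ ε)
    {S S' : Fin n → (Fin d → Bool) × Bool} {i : Fin n}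
    (hSS : ∀ k : Fin n, k ≠ i → S k = S' k) (h : DecList d) :
    pdf H ε S h ≤ ENNReal.ofReal (Real.exp ε) * pdf H ε S' h := by
  by_cases hh : h ∈ H
  swap
  · simp [pdf, hh]
  rw [pdf, pdf, if_pos hh, if_pos hh]
  set E := ENNReal.ofReal (Real.exp (ε / 2)) with hE
  have hE0 : E ≠ 0 := by simp [hE, Real.exp_pos]
  have hEtop : E ≠ ⊤ := ENNReal.ofReal_ne_top
  have hEE : ENNReal.ofReal (Real.exp ε) = E * E := by
    rw [hE, ← ENNReal.ofReal_mul (Real.exp_nonneg _), ← Real.exp_add]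
    norm_num
  have hZ : Z H ε S' ≤ E * Z H ε S := by
    rw [Z, Z, Finset.mul_sum]
    exact Finset.sum_le_sum (fun g _ => wgt_neighbor hε (fun k hk => (hSS k hk).symm))
  rw [hEE, ENNReal.div_le_iff (Z_pos hne).ne' Z_ne_top]
  calc wgt ε h S ≤ E * wgt ε h S' := wgt_neighbor hε hSS
    _ = E * ((wgt ε h S' / Z H ε S') * Z H ε S') := by
        rw [ENNReal.div_mul_cancel (Z_pos hne).ne' Z_ne_top]
    _ ≤ E * ((wgt ε h S' / Z H ε S') * (E * Z H ε S)) :=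
        mul_le_mul_right (mul_le_mul_right hZ _) _
    _ = E * E * (wgt ε h S' / Z H ε S') * Z H ε S := by ring

/-- Per-point bound for hypotheses with true error exceeding `α`. -/
lemma per_point {ε α : ℝ} (hεnn : 0 ≤ ε) (hα0 : 0 < α)
    {D : PMF (Fin d → Bool)} {h c : DecList d}
    (hbad : ¬ errP D h c ≤ ENNReal.ofReal α) :
    ∑ x : Fin d → Bool, D x * (if evalDL h x ≠ evalDL c x
        then ENNReal.ofReal (Real.exp (-(ε / 2))) else 1)
      ≤ ENNReal.ofReal (1 - α * (1 - Real.exp (-(ε / 2)))) := by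
  classical
  set q := ENNReal.ofReal (Real.exp (-(ε / 2))) with hq
  set p := errP D h c with hp
  set s := ∑ x : Fin d → Bool, (if evalDL h x ≠ evalDL c x then 0 else D x) with hs
  have hDsum : ∑ x : Fin d → Bool, D x = 1 := by
    have := D.tsum_coe; rwa [tsum_fintype] at this
  have hps : p + s = 1 := by
    rw [hp, hs, errP, ← Finset.sum_add_distrib, ← hDsum]
    exact Finset.sum_congr rfl (fun x _ => by split <;> simp)
  have hsplit : ∑ x : Fin d → Bool, D x * (if evalDL h x ≠ evalDL c x then q else 1)
      = q * p + s := by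
    rw [hp, errP, hs, Finset.mul_sum, ← Finset.sum_add_distrib]
    refine Finset.sum_congr rfl (fun x _ => ?_)
    split <;> simp [mul_comm]
  have hptop : p ≠ ⊤ := by
    intro hcon
    rw [hcon] at hps
    simp at hps
  have hp1 : p ≤ 1 := by rw [← hps]; exact le_self_add
  set pr := p.toReal with hpr
  have hprop : p = ENNReal.ofReal pr := (ENNReal.ofReal_toReal hptop).symm
  have hαpr : α < pr := by
    rw [not_le] at hbad
    exact (ENNReal.ofReal_lt_iff_lt_toReal hα0.le hptop).1 hbad
  have hpr1 : pr ≤ 1 := by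
    rw [hpr]
    exact ENNReal.toReal_le_of_le_ofReal zero_le_one (by simpa using hp1)
  have hprnn : 0 ≤ pr := ENNReal.toReal_nonneg
  have hseq : s = ENNReal.ofReal (1 - pr) := by
    have : s = 1 - p := by
      rw [← hps, add_comm]; exact (ENNReal.add_sub_cancel_right hptop).symm
    rw [this, hprop, ← ENNReal.ofReal_one, ← ENNReal.ofReal_sub _ hprnn]
  have htle : Real.exp (-(ε / 2)) ≤ 1 := by
    rw [← Real.exp_zero]
    apply Real.exp_le_exp.2
    linarith
  rw [hsplit, hprop, hseq, hq, ← ENNReal.ofReal_mul (Real.exp_nonneg _),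
    ← ENNReal.ofReal_add (by positivity) (by linarith)]
  apply ENNReal.ofReal_le_ofReal
  set t := Real.exp (-(ε / 2)) with ht
  have htnn : 0 ≤ t := Real.exp_nonneg _
  nlinarith [mul_le_mul_of_nonneg_left hαpr.le (by linarith : (0:ℝ) ≤ 1 - t)]

lemma pow_exp_bound {α t : ℝ} (hα0 : 0 < α) (hα1 : α ≤ 1) (ht0 : 0 ≤ t) (ht1 : t ≤ 1)
    (n : ℕ) :
    ENNReal.ofReal (1 - α * (1 - t)) ^ n ≤
      ENNReal.ofReal (Real.exp (-((n : ℝ) * (α * (1 - t))))) := by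
  set u := α * (1 - t) with hu
  have hu0 : 0 ≤ u := mul_nonneg hα0.le (by linarith)
  have hu1 : u ≤ 1 := by nlinarith
  rw [← ENNReal.ofReal_pow (by linarith)]
  apply ENNReal.ofReal_le_ofReal
  calc (1 - u) ^ n ≤ Real.exp (-u) ^ n := by
        apply pow_le_pow_left₀ (by linarith)
        linarith [Real.add_one_le_exp (-u)]
    _ = Real.exp (-((n:ℝ) * u)) := by
        rw [← Real.exp_nat_mul]; ring_nf
end Aux13

open scoped Classical in
/-- Private PAC learning of `F`-decision lists: for any finite feature class `F` containing
the constant-true function, with `M = |F|`, and any `ε, δ, α, β ∈ (0,1)` and sample size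
`n ≥ max((64/α)(VC(C) log(64/α) + log(16/β)), 8M log(2M/√β)(2 log(1/δ) + 3/2)/(αε))`,
there is a randomized algorithm mapping samples of size `n` to distributions over
`F`-decision lists that is `(ε,δ)`-differentially private and `(α,β)`-PAC learns the class
of `F`-decision lists. -/
theorem stmt_13 (d : ℕ) (F : Finset (Feature d))
    (hTF : (fun _ => true) ∈ F)
    (ε δ α β : ℝ)
    (hε : ε ∈ Set.Ioo (0:ℝ) 1) (hδ : δ ∈ Set.Ioo (0:ℝ) 1)
    (hα : α ∈ Set.Ioo (0:ℝ) 1) (hβ : β ∈ Set.Ioo (0:ℝ) 1)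
    (n : ℕ)
    (hn : max
        ((64 / α) * ((vcDim (FDLClass d F) : ℝ) * Real.log (64 / α) + Real.log (16 / β)))
        (8 * (F.card : ℝ) * Real.log (2 * (F.card : ℝ) / Real.sqrt β) *
          (2 * Real.log (1 / δ) + 3 / 2) / (α * ε))
      ≤ (n : ℝ)) :
    ∃ L : (Fin n → (Fin d → Bool) × Bool) → PMF (DecList d),
      -- the output is (a distribution over) F-decision lists
      (∀ S : Fin n → (Fin d → Bool) × Bool, ∀ h ∈ (L S).support, IsFDL F h) ∧
      -- (ε, δ)-differential privacy
      (∀ S S' : Fin n → (Fin d → Bool) × Bool,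
        (∃ i : Fin n, ∀ k : Fin n, k ≠ i → S k = S' k) →
        ∀ R : Set (DecList d),
          (L S).toOuterMeasure R
            ≤ ENNReal.ofReal (Real.exp ε) * (L S').toOuterMeasure R
                + ENNReal.ofReal δ) ∧
      -- (α, β)-PAC learning of F-decision lists
      (∀ D : PMF (Fin d → Bool), ∀ c : DecList d, IsFDL F c →
        ENNReal.ofReal (1 - β) ≤
          ∑ xs : Fin n → (Fin d → Bool),
            (∏ i, D (xs i)) *
              (L (fun i => (xs i, evalDL c (xs i)))).toOuterMeasure
                {h | errP D h c ≤ ENNReal.ofReal α}) := by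
  classical
  set H := Aux13.hypSet d F with hH
  have hne : H.Nonempty := Aux13.hypSet_nonempty F hTF
  set LL : (Fin n → (Fin d → Bool) × Bool) → PMF (DecList d) :=
    fun S => PMF.ofFinset (Aux13.pdf H ε S) H (Aux13.sum_pdf hne ε S)
      (fun a ha => by simp only [Aux13.pdf]; exact if_neg ha) with hLL
  refine ⟨LL, ?_, ?_, ?_⟩
  · -- support
    intro S h hh
    rw [hLL, PMF.mem_support_iff, PMF.ofFinset_apply] at hh
    by_cases hmem : h ∈ H
    · exact Aux13.isFDL_of_mem_hypSet hmem
    · simp [Aux13.pdf, hmem] at hh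
  · -- privacy
    rintro S S' ⟨i, hSS⟩ R
    rw [PMF.toOuterMeasure_apply, PMF.toOuterMeasure_apply]
    refine le_trans ?_ le_self_add
    rw [← ENNReal.tsum_mul_left]
    refine ENNReal.tsum_le_tsum (fun h => ?_)
    by_cases hR : h ∈ R
    · rw [Set.indicator_of_mem hR, Set.indicator_of_mem hR, hLL, PMF.ofFinset_apply,
        PMF.ofFinset_apply]
      exact Aux13.pdf_neighbor hne hε.1.le hSS h
    · simp [Set.indicator_of_notMem hR]
  · -- accuracy
    intro D c hc
    obtain ⟨h₀, hh₀H, hh₀⟩ := Aux13.exists_mem_hypSet F hTF c hc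
    have hM1 : 1 ≤ F.card := Finset.card_pos.2 ⟨_, hTF⟩
    have hnB : 8 * (F.card : ℝ) * Real.log (2 * (F.card : ℝ) / Real.sqrt β) *
        (2 * Real.log (1 / δ) + 3 / 2) / (α * ε) ≤ (n : ℝ) :=
      le_trans (le_max_right _ _) hn
    have hnum := Aux13.numeric F.card hM1 ε δ α β n hε hδ hα hβ hnB
    set G : Set (DecList d) := {h | errP D h c ≤ ENNReal.ofReal α} with hG
    set B : Set (DecList d) := {h | ¬ errP D h c ≤ ENNReal.ofReal α} with hB
    set badF := H.filter (fun h => h ∈ B) with hbadF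
    -- normalizer at least 1 for correctly labeled samples
    have hZ1 : ∀ xs : Fin n → (Fin d → Bool),
        (1 : ENNReal) ≤ Aux13.Z H ε (fun i => (xs i, evalDL c (xs i))) := by
      intro xs
      rw [Aux13.Z, hH]
      have h1 := Finset.single_le_sum
        (f := fun g => Aux13.wgt ε g (fun i => (xs i, evalDL c (xs i))))
        (fun _ _ => zero_le) hh₀H
      rwa [Aux13.wgt_miss_zero hh₀] at h1
    -- pointwise bound on the bad-event probability
    have key1 : ∀ xs : Fin n → (Fin d → Bool),
        (LL (fun i => (xs i, evalDL c (xs i)))).toOuterMeasure B ≤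
          ∑ h ∈ badF, Aux13.wgt ε h (fun i => (xs i, evalDL c (xs i))) := by
      intro xs
      rw [PMF.toOuterMeasure_apply]
      have hpt : ∀ h : DecList d, B.indicator (LL (fun i => (xs i, evalDL c (xs i)))) h ≤
          (if h ∈ badF then Aux13.wgt ε h (fun i => (xs i, evalDL c (xs i))) else 0) := by
        intro h
        by_cases hBh : h ∈ B
        · rw [Set.indicator_of_mem hBh, hLL, PMF.ofFinset_apply, Aux13.pdf]
          by_cases hmem : h ∈ H
          · rw [if_pos hmem, if_pos (Finset.mem_filter.2 ⟨hmem, hBh⟩)]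
            calc Aux13.wgt ε h _ / Aux13.Z H ε _ ≤
                  Aux13.wgt ε h (fun i => (xs i, evalDL c (xs i))) / 1 :=
                    ENNReal.div_le_div le_rfl (hZ1 xs)
              _ = _ := by rw [div_one]
          · rw [if_neg hmem]
            exact zero_le
        · rw [Set.indicator_of_notMem hBh]
          exact zero_le
      have e1 : (∑' h : DecList d, (if h ∈ badF
            then Aux13.wgt ε h (fun i => (xs i, evalDL c (xs i))) else 0))
          = ∑ h ∈ badF, (if h ∈ badF
            then Aux13.wgt ε h (fun i => (xs i, evalDL c (xs i))) else 0) :=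
        tsum_eq_sum (fun b hb => if_neg hb)
      refine le_trans (ENNReal.tsum_le_tsum hpt) (le_of_eq ?_)
      rw [e1]
      exact Finset.sum_congr rfl (fun h hh => if_pos hh)
    -- sum over samples factorizes
    have hstep2 : ∑ xs : Fin n → (Fin d → Bool), (∏ i, D (xs i)) *
          ∑ h ∈ badF, Aux13.wgt ε h (fun i => (xs i, evalDL c (xs i)))
        = ∑ h ∈ badF, (∑ x : Fin d → Bool, D x *
            (if evalDL h x ≠ evalDL c x then ENNReal.ofReal (Real.exp (-(ε / 2))) else 1)) ^ n := by
      simp_rw [Finset.mul_sum]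
      rw [Finset.sum_comm]
      refine Finset.sum_congr rfl (fun h _ => ?_)
      rw [Fintype.sum_pow]
      refine Finset.sum_congr rfl (fun xs _ => ?_)
      rw [Aux13.wgt_eq_prod, ← Finset.prod_mul_distrib]
    -- per-hypothesis bound
    have hstep3 : ∀ h ∈ badF, (∑ x : Fin d → Bool, D x *
          (if evalDL h x ≠ evalDL c x then ENNReal.ofReal (Real.exp (-(ε / 2))) else 1)) ^ n
        ≤ ENNReal.ofReal (Real.exp (-((n : ℝ) * (α * (1 - Real.exp (-(ε / 2))))))) := by
      intro h hh
      have hbad : ¬ errP D h c ≤ ENNReal.ofReal α := (Finset.mem_filter.1 hh).2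
      have htle : Real.exp (-(ε / 2)) ≤ 1 := by
        rw [← Real.exp_zero]
        apply Real.exp_le_exp.2
        linarith [hε.1]
      refine le_trans (pow_le_pow_left' (Aux13.per_point hε.1.le hα.1 hbad) n) ?_
      exact Aux13.pow_exp_bound hα.1 hα.2.le (Real.exp_nonneg _) htle n
    -- the union bound
    have hkey : ∑ xs : Fin n → (Fin d → Bool), (∏ i, D (xs i)) *
          (LL (fun i => (xs i, evalDL c (xs i)))).toOuterMeasure B ≤ ENNReal.ofReal β := by
      have hcard : (badF.card : ENNReal) ≤
          ENNReal.ofReal ((2 * (F.card : ℝ)) ^ F.card * 2) := by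
        have h1 : badF.card ≤ (2 * F.card) ^ F.card * 2 :=
          le_trans (Finset.card_filter_le _ _) (Aux13.card_hypSet_le F)
        calc (badF.card : ENNReal) ≤ (((2 * F.card) ^ F.card * 2 : ℕ) : ENNReal) := by
              exact_mod_cast h1
          _ = ENNReal.ofReal ((((2 * F.card) ^ F.card * 2 : ℕ)) : ℝ) :=
              (ENNReal.ofReal_natCast _).symm
          _ = ENNReal.ofReal ((2 * (F.card : ℝ)) ^ F.card * 2) := by push_cast; ring_nf
      calc ∑ xs : Fin n → (Fin d → Bool), (∏ i, D (xs i)) *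
            (LL (fun i => (xs i, evalDL c (xs i)))).toOuterMeasure B
          ≤ ∑ xs : Fin n → (Fin d → Bool), (∏ i, D (xs i)) *
            ∑ h ∈ badF, Aux13.wgt ε h (fun i => (xs i, evalDL c (xs i))) :=
            Finset.sum_le_sum (fun xs _ => mul_le_mul_right (key1 xs) _)
        _ = ∑ h ∈ badF, (∑ x : Fin d → Bool, D x *
            (if evalDL h x ≠ evalDL c x then ENNReal.ofReal (Real.exp (-(ε / 2))) else 1)) ^ n :=
            hstep2
        _ ≤ ∑ _h ∈ badF,
            ENNReal.ofReal (Real.exp (-((n : ℝ) * (α * (1 - Real.exp (-(ε / 2))))))) :=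
            Finset.sum_le_sum hstep3
        _ = (badF.card : ENNReal) *
            ENNReal.ofReal (Real.exp (-((n : ℝ) * (α * (1 - Real.exp (-(ε / 2))))))) := by
            rw [Finset.sum_const, nsmul_eq_mul]
        _ ≤ ENNReal.ofReal ((2 * (F.card : ℝ)) ^ F.card * 2) *
            ENNReal.ofReal (Real.exp (-((n : ℝ) * (α * (1 - Real.exp (-(ε / 2))))))) :=
            mul_le_mul_left hcard _
        _ = ENNReal.ofReal (((2 * (F.card : ℝ)) ^ F.card * 2) *
            Real.exp (-((n : ℝ) * (α * (1 - Real.exp (-(ε / 2))))))) :=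
            (ENNReal.ofReal_mul (by positivity)).symm
        _ ≤ ENNReal.ofReal β := ENNReal.ofReal_le_ofReal hnum
    -- total mass
    have hxs1 : ∑ xs : Fin n → (Fin d → Bool), ∏ i, D (xs i) = 1 := by
      rw [← Fintype.sum_pow]
      have : ∑ x : Fin d → Bool, D x = 1 := by
        have := D.tsum_coe; rwa [tsum_fintype] at this
      rw [this, one_pow]
    have hunion : ∀ S : Fin n → (Fin d → Bool) × Bool,
        (1 : ENNReal) ≤ (LL S).toOuterMeasure G + (LL S).toOuterMeasure B := by
      intro S
      have h2 : G ∪ B = Set.univ := by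
        ext h
        simp only [Set.mem_union, Set.mem_setOf_eq, Set.mem_univ, iff_true, hG, hB]
        exact em _
      have h3 : (LL S).toOuterMeasure Set.univ = 1 := by
        rw [PMF.toOuterMeasure_apply]
        simp only [Set.indicator_univ]
        exact (LL S).tsum_coe
      calc (1 : ENNReal) = (LL S).toOuterMeasure (G ∪ B) := by rw [h2, h3]
        _ ≤ (LL S).toOuterMeasure G + (LL S).toOuterMeasure B := MeasureTheory.measure_union_le G B
    have htot : (1 : ENNReal) ≤
        (∑ xs : Fin n → (Fin d → Bool), (∏ i, D (xs i)) *
          (LL (fun i => (xs i, evalDL c (xs i)))).toOuterMeasure G) +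
        ∑ xs : Fin n → (Fin d → Bool), (∏ i, D (xs i)) *
          (LL (fun i => (xs i, evalDL c (xs i)))).toOuterMeasure B := by
      calc (1 : ENNReal) = ∑ xs : Fin n → (Fin d → Bool), ∏ i, D (xs i) := hxs1.symm
        _ ≤ ∑ xs : Fin n → (Fin d → Bool), (∏ i, D (xs i)) *
            ((LL (fun i => (xs i, evalDL c (xs i)))).toOuterMeasure G +
             (LL (fun i => (xs i, evalDL c (xs i)))).toOuterMeasure B) := by
            refine Finset.sum_le_sum (fun xs _ => ?_)
            conv_lhs => rw [← mul_one (∏ i, D (xs i))]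
            exact mul_le_mul_right (hunion _) _
        _ = _ := by
            simp_rw [mul_add]
            rw [Finset.sum_add_distrib]
    -- conclude
    have hofReal : ENNReal.ofReal (1 - β) = 1 - ENNReal.ofReal β := by
      rw [ENNReal.ofReal_sub _ hβ.1.le, ENNReal.ofReal_one]
    rw [hofReal, tsub_le_iff_right]
    calc (1 : ENNReal) ≤ _ := htot
      _ ≤ (∑ xs : Fin n → (Fin d → Bool), (∏ i, D (xs i)) *
            (LL (fun i => (xs i, evalDL c (xs i)))).toOuterMeasure G) + ENNReal.ofReal β :=
          add_le_add le_rfl hkey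
end
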